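/- Let F be a suc-stable fragment whose quantifier depth is bounded by n ∈ ℕ, and let u, v be countable words. If Duplicator has a winning strategy in the F-game on (u, v), then for every m ≥ 2^{n+1} − 1, Duplicator has a winning strategy in the F-game on (u^m, v^ρ) and in the F-game on (u^ρ, v^m). -/

import Mathlib

set_option autoImplicit false

instance instCountableLex {α : Type*} [Countable α] : Countable (Lex α) :=
  inferInstanceAs (Countable α)

namespace EFGames

/-! ### Syntax of first-order logic over words.
Letters of the alphabet `Λ` and first-order variables are represented by natural numbers. -/

inductive FOForm : Type where
  | top | bot | empt
  | eq (x y : ℕ) | lab (x a : ℕ)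
  | lt (x y : ℕ) | le (x y : ℕ) | suc (x y : ℕ)
  | fmin (x : ℕ) | fmax (x : ℕ)
  | not (φ : FOForm) | or (φ ψ : FOForm) | and (φ ψ : FOForm)
  | ex (x : ℕ) (φ : FOForm) | all (x : ℕ) (φ : FOForm)

/-- Free variables of a formula. -/
def FOForm.FV : FOForm → Finset ℕ
  | .top | .bot | .empt => ∅
  | .eq x y | .lt x y | .le x y | .suc x y => {x, y}
  | .lab x _ | .fmin x | .fmax x => {x}
  | .not φ => φ.FV
  | .or φ ψ | .and φ ψ => φ.FV ∪ ψ.FV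
  | .ex x φ | .all x φ => φ.FV.erase x

/-- Quantifier depth. -/
def FOForm.qd : FOForm → ℕ
  | .not φ => φ.qd
  | .or φ ψ | .and φ ψ => max φ.qd ψ.qd
  | .ex _ φ | .all _ φ => φ.qd + 1
  | _ => 0

/-- All variables occurring in a formula (free or bound). -/
def FOForm.vars : FOForm → Finset ℕ
  | .top | .bot | .empt => ∅
  | .eq x y | .lt x y | .le x y | .suc x y => {x, y}
  | .lab x _ | .fmin x | .fmax x => {x}
  | .not φ => φ.vars
  | .or φ ψ | .and φ ψ => φ.vars ∪ ψ.vars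
  | .ex x φ | .all x φ => insert x φ.vars

/-- The formula contains none of the predicates `suc`, `min`, `max`, `empty`. -/
def FOForm.NoSMME : FOForm → Prop
  | .empt | .suc _ _ | .fmin _ | .fmax _ => False
  | .not φ => φ.NoSMME
  | .or φ ψ | .and φ ψ => φ.NoSMME ∧ ψ.NoSMME
  | .ex _ φ | .all _ φ => φ.NoSMME
  | _ => True

/-- The formula contains the predicate `≤` or `<`. -/
def FOForm.HasOrder : FOForm → Prop
  | .lt _ _ | .le _ _ => True
  | .not φ => φ.HasOrder
  | .or φ ψ | .and φ ψ => φ.HasOrder ∨ ψ.HasOrder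
  | .ex _ φ | .all _ φ => φ.HasOrder
  | _ => False

/-- The formula contains one of the predicates `suc`, `min`, `max`, `empty`. -/
def FOForm.HasSMME : FOForm → Prop
  | .empt | .suc _ _ | .fmin _ | .fmax _ => True
  | .not φ => φ.HasSMME
  | .or φ ψ | .and φ ψ => φ.HasSMME ∨ ψ.HasSMME
  | .ex _ φ | .all _ φ => φ.HasSMME
  | _ => False

def FOForm.IsAtomic : FOForm → Prop
  | .top | .bot | .empt | .eq _ _ | .lab _ _ | .lt _ _ | .le _ _
  | .suc _ _ | .fmin _ | .fmax _ => True
  | _ => False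

/-- A literal is an atomic formula or a negated atomic formula. -/
def FOForm.IsLiteral (φ : FOForm) : Prop :=
  φ.IsAtomic ∨ ∃ ψ : FOForm, ψ.IsAtomic ∧ φ = .not ψ

/-- A sentence is a formula without free variables. -/
def FOForm.IsSentence (φ : FOForm) : Prop := φ.FV = ∅

/-- Contexts: formulas with exactly one occurrence of a placeholder `∘`. -/
inductive FOCtx : Type where
  | hole
  | notC (μ : FOCtx)
  | orL (μ : FOCtx) (ψ : FOForm)
  | orR (φ : FOForm) (μ : FOCtx)
  | andL (μ : FOCtx) (ψ : FOForm)
  | andR (φ : FOForm) (μ : FOCtx)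
  | exC (x : ℕ) (μ : FOCtx)
  | allC (x : ℕ) (μ : FOCtx)

/-- Substituting a formula for the placeholder of a context. -/
def FOCtx.subst : FOCtx → FOForm → FOForm
  | .hole, φ => φ
  | .notC μ, φ => .not (μ.subst φ)
  | .orL μ ψ, φ => .or (μ.subst φ) ψ
  | .orR χ μ, φ => .or χ (μ.subst φ)
  | .andL μ ψ, φ => .and (μ.subst φ) ψ
  | .andR χ μ, φ => .and χ (μ.subst φ)
  | .exC x μ, φ => .ex x (μ.subst φ)
  | .allC x μ, φ => .all x (μ.subst φ)

/-- A fragment: a nonempty set of formulas satisfying the syntactic closure properties. -/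
structure IsFragment (F : Set FOForm) : Prop where
  nonempty : F.Nonempty
  top_mem : ∀ (μ : FOCtx) (φ : FOForm), μ.subst φ ∈ F → μ.subst .top ∈ F
  bot_mem : ∀ (μ : FOCtx) (φ : FOForm), μ.subst φ ∈ F → μ.subst .bot ∈ F
  lab_mem : ∀ (μ : FOCtx) (φ : FOForm) (x a : ℕ), μ.subst φ ∈ F → μ.subst (.lab x a) ∈ F
  or_mem : ∀ (μ : FOCtx) (φ ψ : FOForm),
    μ.subst (.or φ ψ) ∈ F ↔ μ.subst φ ∈ F ∧ μ.subst ψ ∈ F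
  and_mem : ∀ (μ : FOCtx) (φ ψ : FOForm),
    μ.subst (.and φ ψ) ∈ F ↔ μ.subst φ ∈ F ∧ μ.subst ψ ∈ F
  negneg : ∀ (μ : FOCtx) (φ : FOForm), μ.subst (.not (.not φ)) ∈ F → μ.subst φ ∈ F
  ex_drop : ∀ (μ : FOCtx) (φ : FOForm) (x : ℕ),
    μ.subst (.ex x φ) ∈ F → x ∉ φ.FV → μ.subst φ ∈ F
  all_drop : ∀ (μ : FOCtx) (φ : FOForm) (x : ℕ),
    μ.subst (.all x φ) ∈ F → x ∉ φ.FV → μ.subst φ ∈ F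

/-- A fragment is order-stable if `μ(x<y) ∈ F ↔ μ(x≤y) ∈ F`. -/
def OrderStable (F : Set FOForm) : Prop :=
  ∀ (μ : FOCtx) (x y : ℕ), μ.subst (.lt x y) ∈ F ↔ μ.subst (.le x y) ∈ F

/-- A fragment is suc-stable if it satisfies the two closure conditions for `suc`, `min`, `max`, `empty`. -/
def SucStable (F : Set FOForm) : Prop :=
  (∀ (μ : FOCtx) (x y : ℕ), μ.subst (.suc x y) ∈ F →
      μ.subst (.eq x y) ∈ F ∧ μ.subst (.fmax x) ∈ F ∧ μ.subst (.fmin y) ∈ F) ∧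
  (∀ (μ : FOCtx) (x : ℕ), (μ.subst (.fmin x) ∈ F ∨ μ.subst (.fmax x) ∈ F) →
      μ.subst .empt ∈ F)

/-- The fragment has quantifier depth bounded by `n`. -/
def QDBoundedBy (F : Set FOForm) (n : ℕ) : Prop := ∀ φ ∈ F, φ.qd ≤ n

/-- Quantifiers, including the negated quantifiers. -/
inductive Quant : Type | qex | qall | qnex | qnall

def Quant.apply : Quant → ℕ → FOForm → FOForm
  | .qex, x, φ => .ex x φ
  | .qall, x, φ => .all x φ
  | .qnex, x, φ => .not (.ex x φ)
  | .qnall, x, φ => .not (.all x φ)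

/-- The reduct `Qx⁻¹F` of a set of formulas. -/
def reduct (Q : Quant) (x : ℕ) (F : Set FOForm) : Set FOForm := {φ | Q.apply x φ ∈ F}
/-! ### Generalized words -/

/-- A (countable) generalized word over the alphabet `ℕ`: a countable linear order
labeled by letters. Words are compared up to label-preserving order isomorphism
(`GWord.Iso`). -/
structure GWord : Type 1 where
  carrier : Type
  ord : LinearOrder carrier
  cnt : Countable carrier
  label : carrier → ℕ

attribute [instance] GWord.ord GWord.cnt

/-- Label-preserving order isomorphism of generalized words. -/
def GWord.Iso (u v : GWord) : Prop :=
  ∃ f : u.carrier ≃o v.carrier, ∀ p : u.carrier, v.label (f p) = u.label p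

/-- Satisfaction of a formula in a word under a (partial) valuation of the variables. -/
def GWord.Sat (u : GWord) : (ℕ → Option u.carrier) → FOForm → Prop
  | _, .top => True
  | _, .bot => False
  | _, .empt => IsEmpty u.carrier
  | α, .eq x y => ∃ p q : u.carrier, α x = some p ∧ α y = some q ∧ p = q
  | α, .lab x a => ∃ p : u.carrier, α x = some p ∧ u.label p = a
  | α, .lt x y => ∃ p q : u.carrier, α x = some p ∧ α y = some q ∧ p < q
  | α, .le x y => ∃ p q : u.carrier, α x = some p ∧ α y = some q ∧ p ≤ q
  | α, .suc x y => ∃ p q : u.carrier, α x = some p ∧ α y = some q ∧ p < q ∧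
      ∀ r : u.carrier, ¬ (p < r ∧ r < q)
  | α, .fmin x => ∃ p : u.carrier, α x = some p ∧ ∀ q : u.carrier, p ≤ q
  | α, .fmax x => ∃ p : u.carrier, α x = some p ∧ ∀ q : u.carrier, q ≤ p
  | α, .not φ => ¬ u.Sat α φ
  | α, .or φ ψ => u.Sat α φ ∨ u.Sat α ψ
  | α, .and φ ψ => u.Sat α φ ∧ u.Sat α ψ
  | α, .ex x φ => ∃ p : u.carrier, u.Sat (fun y => if y = x then some p else α y) φ
  | α, .all x φ => ∀ p : u.carrier, u.Sat (fun y => if y = x then some p else α y) φ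

/-- The empty valuation. -/
def emptyVal (u : GWord) : ℕ → Option u.carrier := fun _ => none

/-- A word satisfies a sentence. -/
def SatS (u : GWord) (φ : FOForm) : Prop := u.Sat (emptyVal u) φ

/-- Updating a valuation at a variable. -/
def updVal {u : GWord} (α : ℕ → Option u.carrier) (x : ℕ) (p : u.carrier) :
    ℕ → Option u.carrier :=
  fun y => if y = x then some p else α y

/-- The domain of the valuation `α` is exactly the finite set `V`. -/
def ValDom {u : GWord} (α : ℕ → Option u.carrier) (V : Finset ℕ) : Prop :=
  ∀ x : ℕ, (α x).isSome ↔ x ∈ V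

/-- A finite word, regarded as a generalized word. -/
def listToGWord (w : List ℕ) : GWord :=
  ⟨Fin w.length, inferInstance, inferInstance, w.get⟩

/-- Concatenation of generalized words. -/
def GWord.concat (u v : GWord) : GWord :=
  ⟨u.carrier ⊕ₗ v.carrier, inferInstance, inferInstance,
    fun p => Sum.elim u.label v.label (ofLex p)⟩

/-- The `τ`-power of a word, where `τ` is the order type of the countable linear order `T`:
positions are pairs `(t, p)` ordered with the `T`-component dominant. -/
def GWord.pow (u : GWord) (T : Type) [LinearOrder T] [Countable T] : GWord :=
  ⟨T ×ₗ u.carrier, inferInstance, inferInstance, fun p => u.label (ofLex p).2⟩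

/-- An index type of order type `ρ = ω + ζ·η + ω*`: a copy of `ℕ`, followed by `ℤ × ℚ`
ordered lexicographically with the `ℚ`-component dominant, followed by the negative
integers (the order dual of `ℕ`). -/
abbrev Rho : Type := (ℕ ⊕ₗ (ℚ ×ₗ ℤ)) ⊕ₗ ℕᵒᵈ

/-- ρ-rational words: built from finite words by concatenation and ρ-power
(closed under isomorphism, since words are identified up to isomorphism). -/
inductive RhoRational : GWord → Prop where
  | fin (w : List ℕ) : RhoRational (listToGWord w)
  | concat {u v : GWord} : RhoRational u → RhoRational v → RhoRational (u.concat v)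
  | rpow {u : GWord} : RhoRational u → RhoRational (u.pow Rho)
  | iso {u v : GWord} : RhoRational u → GWord.Iso u v → RhoRational v
/-! ### The `F`-game -/

/-- A configuration of the `F`-game: a set of formulas (an iterated reduct of the
original fragment) together with two valuations on two words. -/
structure Config : Type 1 where
  frag : Set FOForm
  w1 : GWord
  w2 : GWord
  val1 : ℕ → Option w1.carrier
  val2 : ℕ → Option w2.carrier

/-- Spoiler's winning condition: the configuration contains a literal with free variables
inside the valuation domain, satisfied in the first valuation but not in the second. -/
def SpoilerWinsNow (C : Config) : Prop :=
  ∃ φ ∈ C.frag, φ.IsLiteral ∧ (∀ y ∈ φ.FV, (C.val1 y).isSome) ∧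
    C.w1.Sat C.val1 φ ∧ ¬ C.w2.Sat C.val2 φ

/-- A set of configurations is a (Duplicator-)safe invariant: no configuration in it is
immediately winning for Spoiler, and for every move of Spoiler (a quantifier `Q`, a
variable `x` with nonempty reduct, and a quest `q` in the appropriate word) Duplicator
has a reply `r` leading back into the set (the valuations are swapped for negated
quantifiers). -/
def SafeInv (Good : Set Config) : Prop :=
  ∀ D ∈ Good,
    (¬ SpoilerWinsNow D) ∧
    (∀ x : ℕ, (reduct .qex x D.frag).Nonempty →
      ∀ q : D.w1.carrier, ∃ r : D.w2.carrier,
        (⟨reduct .qex x D.frag, D.w1, D.w2, updVal D.val1 x q, updVal D.val2 x r⟩ : Config) ∈ Good) ∧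
    (∀ x : ℕ, (reduct .qall x D.frag).Nonempty →
      ∀ q : D.w2.carrier, ∃ r : D.w1.carrier,
        (⟨reduct .qall x D.frag, D.w1, D.w2, updVal D.val1 x r, updVal D.val2 x q⟩ : Config) ∈ Good) ∧
    (∀ x : ℕ, (reduct .qnex x D.frag).Nonempty →
      ∀ q : D.w2.carrier, ∃ r : D.w1.carrier,
        (⟨reduct .qnex x D.frag, D.w2, D.w1, updVal D.val2 x q, updVal D.val1 x r⟩ : Config) ∈ Good) ∧
    (∀ x : ℕ, (reduct .qnall x D.frag).Nonempty →
      ∀ q : D.w1.carrier, ∃ r : D.w2.carrier,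
        (⟨reduct .qnall x D.frag, D.w2, D.w1, updVal D.val2 x r, updVal D.val1 x q⟩ : Config) ∈ Good)

/-- Duplicator has a winning strategy from a configuration of this (possibly infinite)
safety game iff some safe invariant contains the configuration. -/
def DuplicatorWins (C : Config) : Prop :=
  ∃ Good : Set Config, C ∈ Good ∧ SafeInv Good

/-- Duplicator has a winning strategy in the `F`-game on `(u, v)` (from the initial
configuration with empty valuations). -/
def DuplicatorWinsGame (F : Set FOForm) (u v : GWord) : Prop :=
  DuplicatorWins ⟨F, u, v, fun _ => none, fun _ => none⟩

/-- Spoiler has a winning strategy: either the current configuration is already winning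
for Spoiler, or Spoiler has a move such that every reply of Duplicator (in particular,
no possible reply) leads to a configuration where Spoiler wins. -/
inductive SpoilerWins : Config → Prop where
  | now {C : Config} : SpoilerWinsNow C → SpoilerWins C
  | mex {C : Config} (x : ℕ) (h : (reduct .qex x C.frag).Nonempty) (q : C.w1.carrier)
      (h2 : ∀ r : C.w2.carrier, SpoilerWins
        ⟨reduct .qex x C.frag, C.w1, C.w2, updVal C.val1 x q, updVal C.val2 x r⟩) :
      SpoilerWins C

/-! ### π-terms and their interpretations -/

/-- π-terms over the alphabet `ℕ` (elements of the free π-algebra). -/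
inductive PiTerm : Type where
  | letter (a : ℕ)
  | mul (s t : PiTerm)
  | pi (s : PiTerm)

/-- The interpretation `⟦·⟧_ρ` of π-terms as generalized words: letters become
single-position words, products concatenations, and the π-power the ρ-power. -/
def PiTerm.evalRho : PiTerm → GWord
  | .letter a => listToGWord [a]
  | .mul s t => s.evalRho.concat t.evalRho
  | .pi s => s.evalRho.pow Rho

/-- The interpretation `⟦·⟧_m` of π-terms as finite words: the π-power becomes
the `m`-fold concatenation power. -/
def PiTerm.evalFin (m : ℕ) : PiTerm → GWord
  | .letter a => listToGWord [a]
  | .mul s t => (s.evalFin m).concat (t.evalFin m)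
  | .pi s => (s.evalFin m).pow (Fin m)

/-- `mpow u k = u^(k+1)`: positive powers in any semigroup (or magma). -/
def mpow {M : Type} [Mul M] (u : M) : ℕ → M
  | 0 => u
  | k+1 => mpow u k * u

/-- `k+1` is an idempotency exponent of `M`: `u^(k+1)` is idempotent for every `u`. -/
def IsIdemExpnt (M : Type) [Mul M] (k : ℕ) : Prop :=
  ∀ u : M, mpow u k * mpow u k = mpow u k

/-- Evaluation of a π-term in `M` under a letter assignment `h`, interpreting the
π-power as the `(k+1)`-st power. -/
def PiTerm.evalMul {M : Type} [Mul M] (h : ℕ → M) (k : ℕ) : PiTerm → M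
  | .letter a => h a
  | .mul s t => (s.evalMul h k) * (t.evalMul h k)
  | .pi s => mpow (s.evalMul h k) k

/-- The identity `s = t` of π-terms holds in `M`: for every assignment of the letters and
every idempotency exponent (i.e. interpreting `(·)^π` as the idempotent power), the two
terms evaluate equally. -/
def PiIdentityHolds (M : Type) [Mul M] (s t : PiTerm) : Prop :=
  ∀ (h : ℕ → M) (k : ℕ), IsIdemExpnt M k → s.evalMul h k = t.evalMul h k

/-! ### Languages, definability and syntactic monoids/semigroups -/

/-- All letters of the finite word `w` belong to the alphabet `A`. -/
def InAlph (A : Finset ℕ) (w : FreeMonoid ℕ) : Prop :=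
  ∀ a ∈ FreeMonoid.toList w, a ∈ A

/-- A finite word, regarded as a generalized word. -/
def wordToGWord (w : FreeMonoid ℕ) : GWord := listToGWord (FreeMonoid.toList w)

/-- The submonoid `A* ⊆ Λ*` of words over the finite alphabet `A`. -/
def wordsOver (A : Finset ℕ) : Submonoid (FreeMonoid ℕ) where
  carrier := {w | InAlph A w}
  mul_mem' := by
    intro u v hu hv a ha
    rw [FreeMonoid.toList_mul] at ha
    rcases List.mem_append.mp ha with h | h
    exacts [hu a h, hv a h]
  one_mem' := by
    intro a ha
    simp [FreeMonoid.toList_one] at ha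

/-- The single-letter word `a ∈ A*`. -/
def letterWord (A : Finset ℕ) (a : ℕ) (ha : a ∈ A) : ↥(wordsOver A) :=
  ⟨FreeMonoid.of a, by
    intro b hb
    rw [FreeMonoid.toList_of] at hb
    rcases List.mem_singleton.mp hb with rfl
    exact ha⟩

/-- The language over `A` defined by the sentence `φ`. -/
def LangOf (A : Finset ℕ) (φ : FOForm) : Set (FreeMonoid ℕ) :=
  {w | InAlph A w ∧ SatS (wordToGWord w) φ}

/-- `L ⊆ A*` is definable in `F` over the alphabet `A`. -/
def DefinableIn (F : Set FOForm) (A : Finset ℕ) (L : Set (FreeMonoid ℕ)) : Prop :=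
  ∃ φ ∈ F, φ.IsSentence ∧ L = LangOf A φ

/-- The syntactic congruence of `L` on `A*`: `u ≡_L v` iff `xuy ∈ L ⇔ xvy ∈ L` for all
contexts `x, y ∈ A*`. -/
def synCon (A : Finset ℕ) (L : Set (FreeMonoid ℕ)) : Con ↥(wordsOver A) where
  r u v := ∀ x y : FreeMonoid ℕ, InAlph A x → InAlph A y →
    ((x * ↑u * y ∈ L) ↔ (x * ↑v * y ∈ L))
  iseqv := ⟨fun _ _ _ _ _ => Iff.rfl,
    fun h x y hx hy => (h x y hx hy).symm,
    fun h1 h2 x y hx hy => (h1 x y hx hy).trans (h2 x y hx hy)⟩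
  mul' := by
    intro w x y z h1 h2 a b ha hb
    have hyb : InAlph A ((y : FreeMonoid ℕ) * b) := by
      intro c hc
      rw [FreeMonoid.toList_mul] at hc
      rcases List.mem_append.mp hc with h | h
      exacts [y.2 c h, hb c h]
    have hax : InAlph A (a * (x : FreeMonoid ℕ)) := by
      intro c hc
      rw [FreeMonoid.toList_mul] at hc
      rcases List.mem_append.mp hc with h | h
      exacts [ha c h, x.2 c h]
    have e1 : a * ↑(w * y) * b = a * (w : FreeMonoid ℕ) * (↑y * b) := by
      push_cast; simp [mul_assoc]
    have e2 : a * (x : FreeMonoid ℕ) * (↑y * b) = (a * ↑x) * ↑y * b := by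
      simp [mul_assoc]
    have e3 : (a * (x : FreeMonoid ℕ)) * ↑z * b = a * ↑(x * z) * b := by
      push_cast; simp [mul_assoc]
    rw [e1, h1 a (↑y * b) ha hyb, e2, h2 (a * ↑x) b hax hb, e3]

/-- The syntactic monoid `M_L = A*/≡_L`. -/
def SynMonoid (A : Finset ℕ) (L : Set (FreeMonoid ℕ)) : Type := (synCon A L).Quotient

instance (A : Finset ℕ) (L : Set (FreeMonoid ℕ)) : Monoid (SynMonoid A L) :=
  inferInstanceAs (Monoid (synCon A L).Quotient)

/-- The subsemigroup `A⁺ ⊆ Λ*` of nonempty words over the finite alphabet `A`. -/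
def plusWordsOver (A : Finset ℕ) : Subsemigroup (FreeMonoid ℕ) where
  carrier := {w | w ≠ 1 ∧ InAlph A w}
  mul_mem' := by
    intro u v hu hv
    refine ⟨?_, ?_⟩
    · intro h
      apply hu.1
      have : FreeMonoid.toList (u * v) = FreeMonoid.toList (1 : FreeMonoid ℕ) := by rw [h]
      rw [FreeMonoid.toList_mul, FreeMonoid.toList_one] at this
      exact (List.append_eq_nil_iff.mp this).1
    · intro a ha
      rw [FreeMonoid.toList_mul] at ha
      rcases List.mem_append.mp ha with h | h
      exacts [hu.2 a h, hv.2 a h]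

/-- The syntactic congruence of `L ⊆ A⁺` on `A⁺` (contexts range over `A*`). -/
def synConS (A : Finset ℕ) (L : Set (FreeMonoid ℕ)) : Con ↥(plusWordsOver A) where
  r u v := ∀ x y : FreeMonoid ℕ, InAlph A x → InAlph A y →
    ((x * ↑u * y ∈ L) ↔ (x * ↑v * y ∈ L))
  iseqv := ⟨fun _ _ _ _ _ => Iff.rfl,
    fun h x y hx hy => (h x y hx hy).symm,
    fun h1 h2 x y hx hy => (h1 x y hx hy).trans (h2 x y hx hy)⟩
  mul' := by
    intro w x y z h1 h2 a b ha hb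
    have hyb : InAlph A ((y : FreeMonoid ℕ) * b) := by
      intro c hc
      rw [FreeMonoid.toList_mul] at hc
      rcases List.mem_append.mp hc with h | h
      exacts [y.2.2 c h, hb c h]
    have hax : InAlph A (a * (x : FreeMonoid ℕ)) := by
      intro c hc
      rw [FreeMonoid.toList_mul] at hc
      rcases List.mem_append.mp hc with h | h
      exacts [ha c h, x.2.2 c h]
    have e1 : a * ↑(w * y) * b = a * (w : FreeMonoid ℕ) * (↑y * b) := by
      push_cast; simp [mul_assoc]
    have e2 : a * (x : FreeMonoid ℕ) * (↑y * b) = (a * ↑x) * ↑y * b := by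
      simp [mul_assoc]
    have e3 : (a * (x : FreeMonoid ℕ)) * ↑z * b = a * ↑(x * z) * b := by
      push_cast; simp [mul_assoc]
    rw [e1, h1 a (↑y * b) ha hyb, e2, h2 (a * ↑x) b hax hb, e3]

/-- The syntactic semigroup of `L ⊆ A⁺`. -/
def SynSemigroup (A : Finset ℕ) (L : Set (FreeMonoid ℕ)) : Type := (synConS A L).Quotient

instance (A : Finset ℕ) (L : Set (FreeMonoid ℕ)) : Semigroup (SynSemigroup A L) :=
  inferInstanceAs (Semigroup (synConS A L).Quotient)

/-- The language of nonempty words over `A` defined by the sentence `φ`. -/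
def LangOfPlus (A : Finset ℕ) (φ : FOForm) : Set (FreeMonoid ℕ) :=
  {w | w ≠ 1 ∧ InAlph A w ∧ SatS (wordToGWord w) φ}

/-- `L ⊆ A⁺` is definable in `F` over the alphabet `A`, over nonempty words. -/
def DefinablePlusIn (F : Set FOForm) (A : Finset ℕ) (L : Set (FreeMonoid ℕ)) : Prop :=
  ∃ φ ∈ F, φ.IsSentence ∧ L = LangOfPlus A φ

/-! ### Concatenation of finite families and unions of valuations -/

/-- Concatenation of a finite family of words `u 0, u 1, …, u (k-1)` (in this order). -/
def GWord.concatFam {k : ℕ} (u : Fin k → GWord) : GWord :=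
  ⟨Σₗ i : Fin k, (u i).carrier, inferInstance,
    inferInstanceAs (Countable (Lex (Σ i : Fin k, (u i).carrier))),
    fun p => (u (ofLex p).1).label (ofLex p).2⟩

/-- The union of a family of valuations with (mutually disjoint) domains, as a valuation
on the concatenation. -/
def combineVal {k : ℕ} (u : Fin k → GWord) (α : ∀ i : Fin k, ℕ → Option (u i).carrier)
    (x : ℕ) : Option (GWord.concatFam u).carrier :=
  (List.finRange k).findSome? fun i => ((α i x).map fun p => toLex ⟨i, p⟩)


/-!
Duplicator plays the game on two powers `u ^ I`, `v ^ J` by combining two strategies. On the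
index orders she plays the Ehrenfeucht–Fraïssé strategy for linear orders: with `r` moves left,
the gaps between consecutive chosen indices, sentinels included, are equal or both at least
`2 ^ (r + 1)`, which can be maintained as long as the two end-to-end gaps are at least
`2 ^ (n + 1)`. This holds for `m` copies when `m + 1 ≥ 2 ^ (n + 1)`, and for `ρ`, whose ends
are infinitely far apart: `ρ` is an open interval of `(ℚ ∪ {±∞}) ×ₗ ℤ`, and points in different
fibres are at distance `∞`. Inside the copies she plays her winning strategy on `(u, v)`, in one
sub-game for each pair of copies. Atomic formulas then transfer: between different copies
through the index matching, and inside a copy through the sub-game of that pair of copies.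
-/

namespace FOCtx

def comp : FOCtx → FOCtx → FOCtx
  | .hole, ν => ν
  | .notC μ, ν => .notC (μ.comp ν)
  | .orL μ ψ, ν => .orL (μ.comp ν) ψ
  | .orR φ μ, ν => .orR φ (μ.comp ν)
  | .andL μ ψ, ν => .andL (μ.comp ν) ψ
  | .andR φ μ, ν => .andR φ (μ.comp ν)
  | .exC x μ, ν => .exC x (μ.comp ν)
  | .allC x μ, ν => .allC x (μ.comp ν)

lemma comp_subst (μ ν : FOCtx) (φ : FOForm) : (μ.comp ν).subst φ = μ.subst (ν.subst φ) := by
  induction μ <;> simp [comp, subst, *]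

end FOCtx

def Quant.ctx : Quant → ℕ → FOCtx
  | .qex, x => .exC x .hole
  | .qall, x => .allC x .hole
  | .qnex, x => .notC (.exC x .hole)
  | .qnall, x => .notC (.allC x .hole)

lemma subst_mem_reduct {Q : Quant} {x : ℕ} {F : Set FOForm} {μ : FOCtx} {ψ : FOForm} :
    μ.subst ψ ∈ reduct Q x F ↔ ((Q.ctx x).comp μ).subst ψ ∈ F := by
  rw [FOCtx.comp_subst]
  cases Q <;> rfl

lemma SucStable.reduct {F : Set FOForm} (h : SucStable F) (Q : Quant) (x : ℕ) :
    SucStable (reduct Q x F) := by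
  refine ⟨fun μ a b hm => ?_, fun μ a hm => ?_⟩
  · obtain ⟨h₁, h₂, h₃⟩ := h.1 _ a b (subst_mem_reduct.1 hm)
    exact ⟨subst_mem_reduct.2 h₁, subst_mem_reduct.2 h₂, subst_mem_reduct.2 h₃⟩
  · exact subst_mem_reduct.2 (h.2 _ a (hm.imp subst_mem_reduct.1 subst_mem_reduct.1))

lemma qd_add_one_le_of_mem_reduct {G : Set FOForm} {r : ℕ} (h : ∀ φ ∈ G, φ.qd ≤ r)
    {Q : Quant} {x : ℕ} {φ : FOForm} (hφ : φ ∈ reduct Q x G) : φ.qd + 1 ≤ r := by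
  have := h _ hφ
  cases Q <;> simpa [Quant.apply, FOForm.qd] using this

/-- Gaps that `r` further moves on the index orders cannot tell apart. -/
def GapEquiv (r : ℕ) (d d' : ℕ∞) : Prop :=
  d = d' ∨ (((2 ^ (r + 1) : ℕ) : ℕ∞) ≤ d ∧ ((2 ^ (r + 1) : ℕ) : ℕ∞) ≤ d')

namespace GapEquiv

variable {r : ℕ} {d d' : ℕ∞}

lemma symm (h : GapEquiv r d d') : GapEquiv r d' d :=
  h.imp Eq.symm And.symm

lemma mono {r' : ℕ} (hr : r' ≤ r) (h : GapEquiv r d d') : GapEquiv r' d d' := by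
  have : ((2 ^ (r' + 1) : ℕ) : ℕ∞) ≤ ((2 ^ (r + 1) : ℕ) : ℕ∞) := by
    exact_mod_cast Nat.pow_le_pow_right two_pos (by omega)
  exact h.imp_right fun h => ⟨this.trans h.1, this.trans h.2⟩

lemma add {e e' : ℕ∞} (h : GapEquiv r d d') (he : GapEquiv r e e') :
    GapEquiv r (d + e) (d' + e') := by
  rcases h with rfl | h
  · rcases he with rfl | he
    · exact Or.inl rfl
    · exact Or.inr ⟨he.1.trans le_add_self, he.2.trans le_add_self⟩
  · exact Or.inr ⟨h.1.trans le_self_add, h.2.trans le_self_add⟩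

lemma eq_one_iff (h : GapEquiv r d d') : d = 1 ↔ d' = 1 := by
  have : ¬ ((2 ^ (r + 1) : ℕ) : ℕ∞) ≤ 1 := by
    exact_mod_cast (Nat.one_lt_two_pow (Nat.succ_ne_zero r)).not_ge
  rcases h with rfl | ⟨h, h'⟩
  · rfl
  · exact iff_of_false (fun h1 => this (h1 ▸ h)) (fun h1 => this (h1 ▸ h'))

lemma of_copy_left {d₂ : ℕ∞} {g : ℕ} (hg : g ≤ 2 ^ (r + 1)) (h₂ : d₂ ≠ 0)
    (h : GapEquiv (r + 1) (g + d₂) d') :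
    (g : ℕ∞) < d' ∧ ∀ e, (g : ℕ∞) + e = d' → GapEquiv r d₂ e := by
  have h2 : 2 ^ (r + 2) = 2 * 2 ^ (r + 1) := by ring
  have hB : 0 < 2 ^ (r + 1) := by positivity
  unfold GapEquiv at *
  rw [h2] at h
  generalize 2 ^ (r + 1) = B at *
  refine ⟨?_, fun e he => ?_⟩
  · induction d₂ using ENat.recTopCoe <;> induction d' using ENat.recTopCoe <;>
      simp_all [eq_comm (a := (⊤ : ℕ∞))] <;> norm_cast at * <;> omega
  · subst he
    induction d₂ using ENat.recTopCoe <;> induction e using ENat.recTopCoe <;>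
      simp_all [eq_comm (a := (⊤ : ℕ∞))] <;> norm_cast at * <;> omega

lemma of_both_large {d₁ d₂ : ℕ∞} (h₁ : ((2 ^ (r + 1) : ℕ) : ℕ∞) < d₁)
    (h₂ : ((2 ^ (r + 1) : ℕ) : ℕ∞) < d₂) (h : GapEquiv (r + 1) (d₁ + d₂) d') :
    ((2 ^ (r + 1) : ℕ) : ℕ∞) < d' ∧ ∀ e, ((2 ^ (r + 1) : ℕ) : ℕ∞) + e = d' → GapEquiv r d₂ e := by
  have h2 : 2 ^ (r + 2) = 2 * 2 ^ (r + 1) := by ring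
  have hB : 0 < 2 ^ (r + 1) := by positivity
  unfold GapEquiv at *
  rw [h2] at h
  generalize 2 ^ (r + 1) = B at *
  refine ⟨?_, fun e he => ?_⟩
  · induction d₁ using ENat.recTopCoe <;> induction d₂ using ENat.recTopCoe <;>
      induction d' using ENat.recTopCoe <;>
      simp_all [eq_comm (a := (⊤ : ℕ∞))] <;> norm_cast at * <;> omega
  · subst he
    induction d₁ using ENat.recTopCoe <;> induction d₂ using ENat.recTopCoe <;>
      induction e using ENat.recTopCoe <;>
      simp_all [eq_comm (a := (⊤ : ℕ∞))] <;> norm_cast at * <;> omega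

/-- Duplicator's answer on the index orders, at the level of distances: a gap split into two
nonempty parts on one side can be split on the other side, at a distance `g` from the left or
from the right end, so that the corresponding parts are equivalent with one move less. -/
lemma exists_split {d₁ d₂ : ℕ∞} (h₁ : d₁ ≠ 0) (h₂ : d₂ ≠ 0)
    (h : GapEquiv (r + 1) (d₁ + d₂) d') :
    ∃ g : ℕ, 0 < g ∧ (g : ℕ∞) < d' ∧
      ((GapEquiv r d₁ g ∧ ∀ e, (g : ℕ∞) + e = d' → GapEquiv r d₂ e) ∨
        (GapEquiv r d₂ g ∧ ∀ e, e + (g : ℕ∞) = d' → GapEquiv r d₁ e)) := by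
  by_cases c₁ : d₁ ≤ ((2 ^ (r + 1) : ℕ) : ℕ∞)
  · lift d₁ to ℕ using ne_top_of_le_ne_top (ENat.natCast_ne_top _) c₁
    obtain ⟨hlt, he⟩ := of_copy_left (by exact_mod_cast c₁) h₂ h
    exact ⟨d₁, Nat.pos_of_ne_zero (by exact_mod_cast h₁), hlt, Or.inl ⟨Or.inl rfl, he⟩⟩
  by_cases c₂ : d₂ ≤ ((2 ^ (r + 1) : ℕ) : ℕ∞)
  · lift d₂ to ℕ using ne_top_of_le_ne_top (ENat.natCast_ne_top _) c₂
    obtain ⟨hlt, he⟩ := of_copy_left (by exact_mod_cast c₂) h₁ (add_comm d₁ _ ▸ h)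
    exact ⟨d₂, Nat.pos_of_ne_zero (by exact_mod_cast h₂), hlt,
      Or.inr ⟨Or.inl rfl, fun e h => he e (add_comm e _ ▸ h)⟩⟩
  push Not at c₁ c₂
  obtain ⟨hlt, he⟩ := of_both_large c₁ c₂ h
  exact ⟨2 ^ (r + 1), by positivity, hlt, Or.inl ⟨Or.inr ⟨c₁.le, le_rfl⟩, he⟩⟩

end GapEquiv

abbrev EInd (I : Type) := WithBot (WithTop I)

def eCoe {I : Type} (i : I) : EInd I := ((i : WithTop I) : EInd I)

section EInd

variable {I : Type} [LinearOrder I]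

lemma bot_lt_eCoe (i : I) : (⊥ : EInd I) < eCoe i := WithBot.bot_lt_coe _

lemma eCoe_lt_top (i : I) : eCoe i < (⊤ : EInd I) :=
  WithBot.coe_lt_coe.2 (WithTop.coe_lt_top i)

lemma eCoe_lt_eCoe {i j : I} : eCoe i < eCoe j ↔ i < j :=
  WithBot.coe_lt_coe.trans WithTop.coe_lt_coe

lemma eCoe_covBy_eCoe {i j : I} : eCoe i ⋖ eCoe j ↔ i ⋖ j :=
  WithBot.coe_covBy_coe.trans WithTop.coe_covBy_coe

lemma bot_covBy_eCoe {i : I} : (⊥ : EInd I) ⋖ eCoe i ↔ IsMin i := by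
  rw [eCoe, WithBot.bot_covBy_coe]
  refine ⟨fun h j hj => WithTop.coe_le_coe.1 (h (WithTop.coe_le_coe.2 hj)), fun h e he => ?_⟩
  induction e using WithTop.recTopCoe with
  | top => exact absurd he (WithTop.coe_lt_top i).not_ge
  | coe j => exact WithTop.coe_le_coe.2 (h (WithTop.coe_le_coe.1 he))

lemma eCoe_covBy_top {i : I} : eCoe i ⋖ (⊤ : EInd I) ↔ IsMax i :=
  WithBot.coe_covBy_coe.trans WithTop.coe_covBy_top

end EInd

lemma eCoe_injective {I : Type} : Function.Injective (eCoe : I → EInd I) :=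
  WithBot.coe_injective.comp WithTop.coe_injective

/-- What Duplicator's strategy on an index order needs from a distance. -/
structure GapStruct (I : Type) [LinearOrder I] where
  D : EInd I → EInd I → ℕ∞
  D_ne_zero : ∀ {e e' : EInd I}, e < e' → D e e' ≠ 0
  D_add : ∀ {e e' e'' : EInd I}, e ≤ e' → e' ≤ e'' → D e e'' = D e e' + D e' e''
  D_eq_one_iff : ∀ {e e' : EInd I}, e < e' → (D e e' = 1 ↔ e ⋖ e')
  exists_D_left : ∀ {e e' : EInd I} (g : ℕ), e < e' → 0 < g → (g : ℕ∞) < D e e' →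
    ∃ c : I, e < eCoe c ∧ eCoe c < e' ∧ D e (eCoe c) = g
  exists_D_right : ∀ {e e' : EInd I} (g : ℕ), e < e' → 0 < g → (g : ℕ∞) < D e e' →
    ∃ c : I, e < eCoe c ∧ eCoe c < e' ∧ D (eCoe c) e' = g

lemma GapStruct.nonempty {I : Type} [LinearOrder I] (G : GapStruct I) (h : 1 < G.D ⊥ ⊤) :
    Nonempty I := by
  obtain ⟨c, -⟩ := G.exists_D_left (e := ⊥) (e' := ⊤) 1 (WithBot.bot_lt_coe _) one_pos
    (by exact_mod_cast h)
  exact ⟨c⟩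

section LexDist

variable {Φ : Type} [LinearOrder Φ]

def lexDist (p q : Φ ×ₗ ℤ) : ℕ∞ :=
  if (ofLex p).1 = (ofLex q).1 then (((ofLex q).2 - (ofLex p).2).toNat : ℕ∞) else ⊤

lemma lexDist_of_fst_eq {p q : Φ ×ₗ ℤ} (h : (ofLex p).1 = (ofLex q).1) :
    lexDist p q = (((ofLex q).2 - (ofLex p).2).toNat : ℕ∞) := if_pos h

lemma lexDist_of_fst_ne {p q : Φ ×ₗ ℤ} (h : (ofLex p).1 ≠ (ofLex q).1) : lexDist p q = ⊤ :=
  if_neg h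

lemma lexDist_add {p q s : Φ ×ₗ ℤ} (hpq : p ≤ q) (hqs : q ≤ s) :
    lexDist p s = lexDist p q + lexDist q s := by
  rw [Prod.Lex.le_iff] at hpq hqs
  by_cases h₁ : (ofLex p).1 = (ofLex q).1 <;> by_cases h₂ : (ofLex q).1 = (ofLex s).1
  · rw [lexDist_of_fst_eq h₁, lexDist_of_fst_eq h₂, lexDist_of_fst_eq (h₁.trans h₂)]
    simp only [h₁, h₂, lt_irrefl, false_or, true_and] at hpq hqs
    norm_cast
    omega
  · rw [lexDist_of_fst_ne h₂, lexDist_of_fst_ne (h₁ ▸ h₂), add_top]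
  · rw [lexDist_of_fst_ne h₁, lexDist_of_fst_ne (h₂ ▸ h₁), top_add]
  · have : (ofLex p).1 ≠ (ofLex s).1 := by grind
    rw [lexDist_of_fst_ne h₁, lexDist_of_fst_ne this, top_add]

lemma lexDist_ne_zero {p q : Φ ×ₗ ℤ} (h : p < q) : lexDist p q ≠ 0 := by
  rw [Prod.Lex.lt_iff] at h
  by_cases h₁ : (ofLex p).1 = (ofLex q).1
  · simp only [h₁, lt_irrefl, false_or, true_and] at h
    rw [lexDist_of_fst_eq h₁]
    norm_cast
    omega
  · simp [lexDist_of_fst_ne h₁]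

lemma not_lt_lt_of_lexDist_eq_one {p q s : Φ ×ₗ ℤ} (h : lexDist p q = 1) :
    ¬ (p < s ∧ s < q) := by
  by_cases h₁ : (ofLex p).1 = (ofLex q).1
  · rw [lexDist_of_fst_eq h₁] at h
    norm_cast at h
    rw [Prod.Lex.lt_iff, Prod.Lex.lt_iff]
    grind
  · simp [lexDist_of_fst_ne h₁] at h

lemma exists_lexDist_left {p q : Φ ×ₗ ℤ} (hpq : p < q) {g : ℕ} (hg : 0 < g)
    (h : (g : ℕ∞) < lexDist p q) : ∃ s, p < s ∧ s < q ∧ lexDist p s = g := by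
  refine ⟨toLex ((ofLex p).1, (ofLex p).2 + g), ?_, ?_, ?_⟩
  · exact Prod.Lex.lt_iff.2 (Or.inr ⟨rfl, by simp; omega⟩)
  · rw [Prod.Lex.lt_iff] at hpq ⊢
    by_cases h₁ : (ofLex p).1 = (ofLex q).1
    · rw [lexDist_of_fst_eq h₁] at h
      norm_cast at h
      exact Or.inr ⟨h₁, by simp; omega⟩
    · exact Or.inl (hpq.resolve_right fun h => h₁ h.1)
  · rw [lexDist_of_fst_eq (by simp)]
    simp

lemma exists_lexDist_right {p q : Φ ×ₗ ℤ} (hpq : p < q) {g : ℕ} (hg : 0 < g)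
    (h : (g : ℕ∞) < lexDist p q) : ∃ s, p < s ∧ s < q ∧ lexDist s q = g := by
  refine ⟨toLex ((ofLex q).1, (ofLex q).2 - g), ?_, ?_, ?_⟩
  · rw [Prod.Lex.lt_iff] at hpq ⊢
    by_cases h₁ : (ofLex p).1 = (ofLex q).1
    · rw [lexDist_of_fst_eq h₁] at h
      norm_cast at h
      exact Or.inr ⟨h₁, by simp; omega⟩
    · exact Or.inl (hpq.resolve_right fun h => h₁ h.1)
  · exact Prod.Lex.lt_iff.2 (Or.inr ⟨rfl, by simp; omega⟩)
  · rw [lexDist_of_fst_eq (by simp)]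
    simp

end LexDist

section OfCoords

variable {I Φ : Type} [LinearOrder I] [LinearOrder Φ]

def extCoord (f : I → Φ ×ₗ ℤ) (lo hi : Φ ×ₗ ℤ) : EInd I → Φ ×ₗ ℤ :=
  WithBot.recBotCoe lo (WithTop.recTopCoe hi f)

variable {f : I → Φ ×ₗ ℤ} {lo hi : Φ ×ₗ ℤ}

lemma extCoord_strictMono (hf : StrictMono f) (hlo : lo < hi)
    (hrange : Set.range f = Set.Ioo lo hi) : StrictMono (extCoord f lo hi) := by
  have hmem (i : I) : f i ∈ Set.Ioo lo hi := hrange ▸ Set.mem_range_self i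
  refine WithBot.strictMono_iff.2 ⟨WithTop.strictMono_iff.2 ⟨hf, fun i => (hmem i).2⟩, ?_⟩
  intro e
  induction e using WithTop.recTopCoe with
  | top => exact hlo
  | coe i => exact (hmem i).1

lemma exists_extCoord_eq (hf : StrictMono f) (hlo : lo < hi)
    (hrange : Set.range f = Set.Ioo lo hi) {e e' : EInd I} {s : Φ ×ₗ ℤ}
    (h : extCoord f lo hi e < s) (h' : s < extCoord f lo hi e') :
    ∃ c : I, e < eCoe c ∧ eCoe c < e' ∧ extCoord f lo hi (eCoe c) = s := by
  have hmono := extCoord_strictMono hf hlo hrange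
  have hlo' : lo ≤ extCoord f lo hi e := hmono.monotone (bot_le : (⊥ : EInd I) ≤ e)
  have hhi' : extCoord f lo hi e' ≤ hi := hmono.monotone (le_top : e' ≤ ⊤)
  obtain ⟨c, rfl⟩ : s ∈ Set.range f := hrange ▸ ⟨hlo'.trans_lt h, h'.trans_le hhi'⟩
  exact ⟨c, hmono.lt_iff_lt.1 h, hmono.lt_iff_lt.1 h', rfl⟩

def GapStruct.ofCoords (f : I → Φ ×ₗ ℤ) (lo hi : Φ ×ₗ ℤ) (hf : StrictMono f) (hlo : lo < hi)
    (hrange : Set.range f = Set.Ioo lo hi) : GapStruct I where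
  D e e' := lexDist (extCoord f lo hi e) (extCoord f lo hi e')
  D_ne_zero h := lexDist_ne_zero (extCoord_strictMono hf hlo hrange h)
  D_add h h' := lexDist_add ((extCoord_strictMono hf hlo hrange).monotone h)
    ((extCoord_strictMono hf hlo hrange).monotone h')
  D_eq_one_iff {e e'} h := by
    have hmono := extCoord_strictMono hf hlo hrange
    refine ⟨fun h1 => ⟨h, fun c hc hc' => not_lt_lt_of_lexDist_eq_one h1 ⟨hmono hc, hmono hc'⟩⟩,
      fun hcov => ?_⟩
    by_contra hne
    have h1 : ((1 : ℕ) : ℕ∞) < lexDist (extCoord f lo hi e) (extCoord f lo hi e') := by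
      have := lexDist_ne_zero (hmono h)
      rw [Nat.cast_one]
      exact lt_of_le_of_ne (Order.one_le_iff_ne_zero.2 this) (Ne.symm hne)
    obtain ⟨s, hs, hs', -⟩ := exists_lexDist_left (hmono h) one_pos h1
    obtain ⟨c, hc, hc', -⟩ := exists_extCoord_eq hf hlo hrange hs hs'
    exact hcov.2 hc hc'
  exists_D_left {e e'} g h hg hD := by
    obtain ⟨s, hs, hs', hD'⟩ :=
      exists_lexDist_left (extCoord_strictMono hf hlo hrange h) hg hD
    obtain ⟨c, hc, hc', rfl⟩ := exists_extCoord_eq hf hlo hrange hs hs'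
    exact ⟨c, hc, hc', hD'⟩
  exists_D_right {e e'} g h hg hD := by
    obtain ⟨s, hs, hs', hD'⟩ :=
      exists_lexDist_right (extCoord_strictMono hf hlo hrange h) hg hD
    obtain ⟨c, hc, hc', rfl⟩ := exists_extCoord_eq hf hlo hrange hs hs'
    exact ⟨c, hc, hc', hD'⟩

lemma GapStruct.ofCoords_D_bot_top (hf : StrictMono f) (hlo : lo < hi)
    (hrange : Set.range f = Set.Ioo lo hi) :
    (GapStruct.ofCoords f lo hi hf hlo hrange).D ⊥ ⊤ = lexDist lo hi := rfl

end OfCoords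

section FinGap

variable (m : ℕ)

def finCoord (i : Fin m) : Unit ×ₗ ℤ := toLex ((), (i : ℤ))

lemma finCoord_strictMono : StrictMono (finCoord m) := fun i j h =>
  Prod.Lex.toLex_lt_toLex.2 (Or.inr ⟨rfl, show (i : ℤ) < j by exact_mod_cast h⟩)

lemma range_finCoord :
    Set.range (finCoord m) = Set.Ioo (toLex ((), -1)) (toLex ((), (m : ℤ))) := by
  refine Set.ext (toLex.surjective.forall.2 fun ⟨⟨⟩, o⟩ => ?_)
  simp only [Set.mem_range, Set.mem_Ioo, finCoord, Prod.Lex.toLex_lt_toLex, lt_irrefl,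
    false_or, true_and, EmbeddingLike.apply_eq_iff_eq, Prod.mk.injEq]
  constructor
  · rintro ⟨i, rfl⟩
    omega
  · intro h
    exact ⟨⟨o.toNat, by omega⟩, by simp; omega⟩

def finGap : GapStruct (Fin m) :=
  .ofCoords (finCoord m) (toLex ((), -1)) (toLex ((), (m : ℤ))) (finCoord_strictMono m)
    (Prod.Lex.toLex_lt_toLex.2 (Or.inr ⟨rfl, show (-1 : ℤ) < m by omega⟩)) (range_finCoord m)

lemma finGap_D_bot_top : (finGap m).D ⊥ ⊤ = (m + 1 : ℕ) := by
  rw [finGap, GapStruct.ofCoords_D_bot_top, lexDist_of_fst_eq (by rfl)]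
  simp only [ofLex_toLex]
  norm_cast

end FinGap

section RhoGap

lemma strictMono_sumLexElim {α β γ : Type} [Preorder α] [Preorder β] [Preorder γ]
    {f : α → γ} {g : β → γ} (hf : StrictMono f) (hg : StrictMono g) (hfg : ∀ a b, f a < g b) :
    StrictMono fun t : α ⊕ₗ β => Sum.elim f g (ofLex t) := by
  refine toLex.surjective.forall.2 fun t => toLex.surjective.forall.2 fun t' h => ?_
  rcases t with a | b <;> rcases t' with a' | b'
  · exact hf (Sum.Lex.inl_lt_inl_iff.1 h)
  · exact hfg a b'
  · exact absurd h Sum.Lex.not_inr_lt_inl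
  · exact hg (Sum.Lex.inr_lt_inr_iff.1 h)

/-- The initial `ω` of `ρ` becomes the fibre over `⊥`, its final `ω*` the fibre over `⊤`, and
each copy of `ζ` the fibre over a rational. -/
def rhoCoord (t : Rho) : EInd ℚ ×ₗ ℤ :=
  Sum.elim
    (fun s => Sum.elim (fun k : ℕ => toLex ((⊥ : EInd ℚ), (k : ℤ)))
      (fun p : ℚ ×ₗ ℤ => toLex (eCoe (ofLex p).1, (ofLex p).2)) (ofLex s))
    (fun k : ℕᵒᵈ => toLex ((⊤ : EInd ℚ), -((OrderDual.ofDual k : ℕ) : ℤ))) (ofLex t)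

lemma rhoCoord_strictMono : StrictMono rhoCoord := by
  refine strictMono_sumLexElim (strictMono_sumLexElim ?_ ?_ ?_) ?_ ?_
  · exact fun k k' h =>
      Prod.Lex.toLex_lt_toLex.2 (Or.inr ⟨rfl, show (k : ℤ) < k' by exact_mod_cast h⟩)
  · intro p p' h
    rw [Prod.Lex.lt_iff] at h
    exact Prod.Lex.toLex_lt_toLex.2 (h.imp eCoe_lt_eCoe.2 fun h => ⟨by rw [h.1], h.2⟩)
  · exact fun k p => Prod.Lex.toLex_lt_toLex.2 (Or.inl (bot_lt_eCoe _))
  · intro k k' h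
    refine Prod.Lex.toLex_lt_toLex.2 (Or.inr ⟨rfl, ?_⟩)
    have : OrderDual.ofDual k' < OrderDual.ofDual k := h
    simp only [neg_lt_neg_iff]
    exact_mod_cast this
  · intro s k
    refine Prod.Lex.toLex_lt_toLex.2 (Or.inl ?_)
    rcases s with k' | p
    · exact WithBot.bot_lt_coe _
    · exact eCoe_lt_top _

lemma range_rhoCoord :
    Set.range rhoCoord = Set.Ioo (toLex ((⊥ : EInd ℚ), -1)) (toLex ((⊤ : EInd ℚ), 1)) := by
  refine Set.ext (toLex.surjective.forall.2 fun ⟨φ, o⟩ => ?_)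
  simp only [Set.mem_range, Set.mem_Ioo, Prod.Lex.toLex_lt_toLex]
  constructor
  · rintro ⟨t, ht⟩
    rcases t with (k | p) | k <;> simp [rhoCoord, eq_comm (b := toLex (φ, o))] at ht <;>
      obtain ⟨rfl, rfl⟩ := ht
    · exact ⟨Or.inr ⟨rfl, by omega⟩, Or.inl (WithBot.bot_lt_coe _)⟩
    · exact ⟨Or.inl (bot_lt_eCoe _), Or.inl (eCoe_lt_top _)⟩
    · exact ⟨Or.inl (WithBot.bot_lt_coe _), Or.inr ⟨rfl, by omega⟩⟩
  · rintro ⟨h₁, h₂⟩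
    induction φ using WithBot.recBotCoe with
    | bot =>
      simp only [lt_irrefl, false_or, true_and] at h₁
      exact ⟨toLex (.inl (toLex (.inl o.toNat))), by simp [rhoCoord]; omega⟩
    | coe φ =>
      induction φ using WithTop.recTopCoe with
      | top =>
        simp only [WithBot.coe_top, lt_irrefl, false_or, true_and] at h₂
        exact ⟨toLex (.inr (OrderDual.toDual (-o).toNat)), by simp [rhoCoord]; omega⟩
      | coe q => exact ⟨toLex (.inl (toLex (.inr (toLex (q, o))))), rfl⟩

def rhoGap : GapStruct Rho :=
  .ofCoords rhoCoord (toLex ((⊥ : EInd ℚ), -1)) (toLex ((⊤ : EInd ℚ), 1)) rhoCoord_strictMono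
    (Prod.Lex.toLex_lt_toLex.2 (Or.inl (WithBot.bot_lt_coe _))) range_rhoCoord

lemma rhoGap_D_bot_top : rhoGap.D ⊥ ⊤ = ⊤ := by
  rw [rhoGap, GapStruct.ofCoords_D_bot_top, lexDist_of_fst_ne]
  exact (WithBot.bot_lt_coe _).ne

end RhoGap

lemma exists_neighbours {α β : Type} [LinearOrder α] {S : Set (α × β)} (hS : S.Finite) {t : α}
    (hlo : ∃ z ∈ S, z.1 < t) (hhi : ∃ z ∈ S, t < z.1) (ht : ∀ z ∈ S, z.1 ≠ t) :
    ∃ L ∈ S, ∃ U ∈ S, L.1 < t ∧ t < U.1 ∧ ∀ w ∈ S, ¬ (L.1 < w.1 ∧ w.1 < U.1) := by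
  obtain ⟨L, ⟨hL, hLt⟩, hLmax⟩ := Set.Finite.exists_maximalFor Prod.fst {z ∈ S | z.1 < t}
    (hS.subset fun _ h => h.1) (by simpa only [Set.Nonempty, Set.mem_ofPred_eq] using hlo)
  obtain ⟨U, ⟨hU, htU⟩, hUmin⟩ := Set.Finite.exists_minimalFor Prod.fst {z ∈ S | t < z.1}
    (hS.subset fun _ h => h.1) (by simpa only [Set.Nonempty, Set.mem_ofPred_eq] using hhi)
  refine ⟨L, hL, U, hU, hLt, htU, fun w hw ⟨h₁, h₂⟩ => ?_⟩
  rcases lt_or_gt_of_ne (ht w hw) with h | h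
  · exact h₁.not_ge (hLmax ⟨hw, h⟩ h₁.le)
  · exact h₂.not_ge (hUmin ⟨hw, h⟩ h₂.le)

lemma exists_eCoe_eq {I : Type} {e : EInd I} (hbot : e ≠ ⊥) (htop : e ≠ ⊤) :
    ∃ i, e = eCoe i := by
  induction e using WithBot.recBotCoe with
  | bot => exact absurd rfl hbot
  | coe e =>
    induction e using WithTop.recTopCoe with
    | top => exact absurd rfl htop
    | coe i => exact ⟨i, rfl⟩

section Matching

variable {I J : Type} [LinearOrder I] [LinearOrder J] {GI : GapStruct I} {GJ : GapStruct J}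

structure GapMatching (GI : GapStruct I) (GJ : GapStruct J) (r : ℕ)
    (S : Set (EInd I × EInd J)) : Prop where
  lt_iff : ∀ z ∈ S, ∀ z' ∈ S, z.1 < z'.1 ↔ z.2 < z'.2
  gapEquiv : ∀ z ∈ S, ∀ z' ∈ S, z.1 < z'.1 → (∀ w ∈ S, ¬ (z.1 < w.1 ∧ w.1 < z'.1)) →
    GapEquiv r (GI.D z.1 z'.1) (GJ.D z.2 z'.2)

namespace GapMatching

variable {r : ℕ} {S : Set (EInd I × EInd J)} {z z' : EInd I × EInd J}

lemma le_iff (M : GapMatching GI GJ r S) (hz : z ∈ S) (hz' : z' ∈ S) :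
    z.1 ≤ z'.1 ↔ z.2 ≤ z'.2 := by
  simpa only [not_lt] using (M.lt_iff z' hz' z hz).not

lemma eq_iff (M : GapMatching GI GJ r S) (hz : z ∈ S) (hz' : z' ∈ S) :
    z.1 = z'.1 ↔ z.2 = z'.2 := by
  simp only [le_antisymm_iff, M.le_iff hz hz', M.le_iff hz' hz]

lemma swap (M : GapMatching GI GJ r S) : GapMatching GJ GI r (Prod.swap ⁻¹' S) where
  lt_iff z hz z' hz' := (M.lt_iff _ hz _ hz').symm
  gapEquiv z hz z' hz' h hcons := by
    refine (M.gapEquiv _ hz _ hz' ((M.lt_iff _ hz _ hz').2 h) fun w hw hw' => ?_).symm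
    refine hcons w.swap (by simpa using hw) ⟨?_, ?_⟩
    · exact (M.lt_iff _ hz _ hw).1 hw'.1
    · exact (M.lt_iff _ hw _ hz').1 hw'.2

lemma mono {r' : ℕ} (hr : r' ≤ r) (M : GapMatching GI GJ r S) : GapMatching GI GJ r' S :=
  ⟨M.lt_iff, fun z hz z' hz' h hcons => (M.gapEquiv z hz z' hz' h hcons).mono hr⟩

lemma sentinels (h : GapEquiv r (GI.D ⊥ ⊤) (GJ.D ⊥ ⊤)) :
    GapMatching GI GJ r {((⊥, ⊥) : EInd I × EInd J), (⊤, ⊤)} := by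
  have hI : (⊥ : EInd I) < ⊤ := WithBot.bot_lt_coe _
  have hJ : (⊥ : EInd J) < ⊤ := WithBot.bot_lt_coe _
  refine ⟨?_, ?_⟩
  · rintro z (rfl | rfl) z' (rfl | rfl)
    exacts [iff_of_false (lt_irrefl _) (lt_irrefl _), iff_of_true hI hJ,
      iff_of_false hI.not_gt hJ.not_gt, iff_of_false (lt_irrefl _) (lt_irrefl _)]
  · rintro z (rfl | rfl) z' (rfl | rfl) hlt -
    exacts [absurd hlt (lt_irrefl _), h, absurd hlt hI.not_gt, absurd hlt (lt_irrefl _)]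

/-- Forgetting one pair: the gaps on either side of it add up. -/
lemma of_subset {T : Set (EInd I × EInd J)} (M : GapMatching GI GJ r S) (hTS : T ⊆ S)
    (hST : (S \ T).Subsingleton) : GapMatching GI GJ r T where
  lt_iff z hz z' hz' := M.lt_iff z (hTS hz) z' (hTS hz')
  gapEquiv z hz z' hz' h hcons := by
    by_cases hw : ∃ w ∈ S \ T, z.1 < w.1 ∧ w.1 < z'.1
    · obtain ⟨w, hwS, hw₁, hw₂⟩ := hw
      have hsplit (v) (hv : v ∈ S) (hv₁ : z.1 < v.1) (hv₂ : v.1 < z'.1) : v = w := by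
        by_contra hne
        exact hcons v (by_contra fun h => hne (hST ⟨hv, h⟩ hwS)) ⟨hv₁, hv₂⟩
      rw [GI.D_add hw₁.le hw₂.le, GJ.D_add ((M.lt_iff _ (hTS hz) _ hwS.1).1 hw₁).le
        ((M.lt_iff _ hwS.1 _ (hTS hz')).1 hw₂).le]
      refine (M.gapEquiv _ (hTS hz) _ hwS.1 hw₁ fun v hv hv' => ?_).add
        (M.gapEquiv _ hwS.1 _ (hTS hz') hw₂ fun v hv hv' => ?_)
      · exact hv'.2.ne (congrArg Prod.fst (hsplit v hv hv'.1 (hv'.2.trans hw₂)))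
      · exact hv'.1.ne' (congrArg Prod.fst (hsplit v hv (hw₁.trans hv'.1) hv'.2))
    · refine M.gapEquiv z (hTS hz) z' (hTS hz') h fun w hwS hw' => ?_
      by_cases hwT : w ∈ T
      · exact hcons w hwT hw'
      · exact hw ⟨w, ⟨hwS, hwT⟩, hw'⟩

lemma covBy (M : GapMatching GI GJ r S) (hz : z ∈ S) (hz' : z' ∈ S) (h : z.1 ⋖ z'.1) :
    z.2 ⋖ z'.2 := by
  have hD : GI.D z.1 z'.1 = 1 := (GI.D_eq_one_iff h.lt).2 h
  have hgap := M.gapEquiv z hz z' hz' h.lt fun w _ hw => h.2 hw.1 hw.2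
  exact (GJ.D_eq_one_iff ((M.lt_iff z hz z' hz').1 h.lt)).1 (hgap.eq_one_iff.1 hD)

lemma le_or_le_of_consecutive (M : GapMatching GI GJ r S) {L U w : EInd I × EInd J}
    (hL : L ∈ S) (hU : U ∈ S) (hcons : ∀ w ∈ S, ¬ (L.1 < w.1 ∧ w.1 < U.1)) (hw : w ∈ S) :
    (w.1 ≤ L.1 ∧ w.2 ≤ L.2) ∨ (U.1 ≤ w.1 ∧ U.2 ≤ w.2) := by
  by_cases h : w.1 ≤ L.1
  · exact Or.inl ⟨h, (M.le_iff hw hL).1 h⟩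
  · have h' : U.1 ≤ w.1 := not_lt.1 fun h' => hcons w hw ⟨not_le.1 h, h'⟩
    exact Or.inr ⟨h', (M.le_iff hU hw).1 h'⟩

lemma insert_of_between (M : GapMatching GI GJ r S) {L U : EInd I × EInd J} (hL : L ∈ S)
    (hU : U ∈ S) (hcons : ∀ w ∈ S, ¬ (L.1 < w.1 ∧ w.1 < U.1)) {e : EInd I} {f : EInd J}
    (he : L.1 < e ∧ e < U.1) (hf : L.2 < f ∧ f < U.2)
    (h₁ : GapEquiv r (GI.D L.1 e) (GJ.D L.2 f)) (h₂ : GapEquiv r (GI.D e U.1) (GJ.D f U.2)) :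
    GapMatching GI GJ r (insert (e, f) S) := by
  have hside (w) (hw : w ∈ S) := M.le_or_le_of_consecutive hL hU hcons hw
  have hbelow (w) (hw : w ∈ S) (h : w.1 < e) : w = L ∨ w.1 < L.1 := by
    rcases hside w hw with h' | h'
    · rcases h'.1.lt_or_eq with h'' | h''
      · exact Or.inr h''
      · exact Or.inl (Prod.ext h'' ((M.eq_iff hw hL).1 h''))
    · exact absurd (h.trans he.2) h'.1.not_gt
  have habove (w) (hw : w ∈ S) (h : e < w.1) : w = U ∨ U.1 < w.1 := by
    rcases hside w hw with h' | h'
    · exact absurd (he.1.trans h) h'.1.not_gt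
    · rcases h'.1.lt_or_eq with h'' | h''
      · exact Or.inr h''
      · exact Or.inl (Prod.ext h''.symm ((M.eq_iff hw hU).1 h''.symm))
  have hnew (w) (hw : w ∈ S) : (w.1 < e ↔ w.2 < f) ∧ (e < w.1 ↔ f < w.2) := by
    rcases hside w hw with h | h
    · exact ⟨iff_of_true (h.1.trans_lt he.1) (h.2.trans_lt hf.1),
        iff_of_false (h.1.trans_lt he.1).not_gt (h.2.trans_lt hf.1).not_gt⟩
    · exact ⟨iff_of_false (he.2.trans_le h.1).not_gt (hf.2.trans_le h.2).not_gt,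
        iff_of_true (he.2.trans_le h.1) (hf.2.trans_le h.2)⟩
  refine ⟨?_, ?_⟩
  · rintro z (rfl | hz) z' (rfl | hz')
    · exact iff_of_false (lt_irrefl _) (lt_irrefl _)
    · exact (hnew z' hz').2
    · exact (hnew z hz).1
    · exact M.lt_iff z hz z' hz'
  · rintro z (rfl | hz) z' (rfl | hz') h hcons'
    · exact absurd h (lt_irrefl _)
    · rcases habove z' hz' h with rfl | h'
      · exact h₂
      · exact absurd ⟨he.2, h'⟩ (hcons' U (Or.inr hU))
    · rcases hbelow z hz h with rfl | h'
      · exact h₁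
      · exact absurd ⟨h', he.1⟩ (hcons' L (Or.inr hL))
    · exact M.gapEquiv z hz z' hz' h fun w hw => hcons' w (Or.inr hw)

lemma exists_insert (M : GapMatching GI GJ (r + 1) S) (hS : S.Finite) (hbot : (⊥, ⊥) ∈ S)
    (htop : (⊤, ⊤) ∈ S) (i : I) : ∃ j, GapMatching GI GJ r (insert (eCoe i, eCoe j) S) := by
  by_cases hex : ∃ z ∈ S, z.1 = eCoe i
  · obtain ⟨z, hz, hzi⟩ := hex
    have h₁ : ⊥ < z.2 := (M.lt_iff _ hbot _ hz).1 (hzi ▸ bot_lt_eCoe i)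
    have h₂ : z.2 < ⊤ := (M.lt_iff _ hz _ htop).1 (hzi ▸ eCoe_lt_top i)
    obtain ⟨j, hj⟩ := exists_eCoe_eq h₁.ne' h₂.ne
    have hz' : (eCoe i, eCoe j) ∈ S := by rw [← hzi, ← hj]; exact hz
    refine ⟨j, ?_⟩
    rw [Set.insert_eq_of_mem hz']
    exact M.mono r.le_succ
  push Not at hex
  obtain ⟨L, hL, U, hU, hLi, hiU, hcons⟩ :=
    exists_neighbours hS ⟨_, hbot, bot_lt_eCoe i⟩ ⟨_, htop, eCoe_lt_top i⟩ hex
  have hLU : L.2 < U.2 := (M.lt_iff L hL U hU).1 (hLi.trans hiU)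
  have hgap := M.gapEquiv L hL U hU (hLi.trans hiU) hcons
  rw [GI.D_add hLi.le hiU.le] at hgap
  have M' := M.mono r.le_succ
  obtain ⟨g, hg, hgD, hsplit | hsplit⟩ :=
    hgap.exists_split (GI.D_ne_zero hLi) (GI.D_ne_zero hiU)
  · obtain ⟨c, hc₁, hc₂, hc⟩ := GJ.exists_D_left g hLU hg hgD
    refine ⟨c, M'.insert_of_between hL hU hcons ⟨hLi, hiU⟩ ⟨hc₁, hc₂⟩ (hc ▸ hsplit.1)
      (hsplit.2 _ ?_)⟩
    rw [← hc, ← GJ.D_add hc₁.le hc₂.le]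
  · obtain ⟨c, hc₁, hc₂, hc⟩ := GJ.exists_D_right g hLU hg hgD
    refine ⟨c, M'.insert_of_between hL hU hcons ⟨hLi, hiU⟩ ⟨hc₁, hc₂⟩ (hsplit.2 _ ?_)
      (hc ▸ hsplit.1)⟩
    rw [← hc, ← GJ.D_add hc₁.le hc₂.le]

end GapMatching

end Matching

section IdxPairs

variable {I J A B : Type} {vA : ℕ → Option (I ×ₗ A)} {vB : ℕ → Option (J ×ₗ B)}

def idxPairs (vA : ℕ → Option (I ×ₗ A)) (vB : ℕ → Option (J ×ₗ B)) : Set (EInd I × EInd J) :=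
  {(⊥, ⊥), (⊤, ⊤)} ∪
    {z | ∃ x p q, vA x = some p ∧ vB x = some q ∧ z = (eCoe (ofLex p).1, eCoe (ofLex q).1)}

lemma bot_mem_idxPairs : ((⊥, ⊥) : EInd I × EInd J) ∈ idxPairs vA vB := by simp [idxPairs]

lemma top_mem_idxPairs : ((⊤, ⊤) : EInd I × EInd J) ∈ idxPairs vA vB := by simp [idxPairs]

lemma mem_idxPairs {x : ℕ} {p : I ×ₗ A} {q : J ×ₗ B} (hp : vA x = some p) (hq : vB x = some q) :
    (eCoe (ofLex p).1, eCoe (ofLex q).1) ∈ idxPairs vA vB :=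
  Or.inr ⟨x, p, q, hp, hq, rfl⟩

lemma idxPairs_swap : idxPairs vB vA = Prod.swap ⁻¹' idxPairs vA vB := by
  ext ⟨e, f⟩
  simp only [idxPairs, Set.mem_union, Set.mem_insert_iff, Set.mem_singleton_iff,
    Set.mem_preimage, Prod.swap_prod_mk, Prod.mk.injEq, Set.mem_ofPred_eq]
  constructor <;>
  · rintro ((⟨rfl, rfl⟩ | ⟨rfl, rfl⟩) | ⟨x, p, q, hp, hq, rfl, rfl⟩)
    · exact Or.inl (Or.inl ⟨rfl, rfl⟩)
    · exact Or.inl (Or.inr ⟨rfl, rfl⟩)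
    · exact Or.inr ⟨x, q, p, hq, hp, rfl, rfl⟩

lemma idxPairs_finite (h : {x | (vA x).isSome}.Finite) : (idxPairs vA vB).Finite := by
  refine (Set.toFinite _).union ((h.image fun x => ((vA x).elim ⊥ fun p => eCoe (ofLex p).1,
    (vB x).elim ⊥ fun q => eCoe (ofLex q).1)).subset ?_)
  rintro _ ⟨x, p, q, hp, hq, rfl⟩
  exact ⟨x, by simp [hp], by simp [hp, hq]⟩

lemma idxPairs_update (x : ℕ) (p : I ×ₗ A) (q : J ×ₗ B) :
    idxPairs (Function.update vA x (some p)) (Function.update vB x (some q)) =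
      insert (eCoe (ofLex p).1, eCoe (ofLex q).1)
        (idxPairs (Function.update vA x none) (Function.update vB x none)) := by
  ext z
  constructor
  · rintro (hz | ⟨y, p', q', hp', hq', rfl⟩)
    · exact Or.inr (Or.inl hz)
    · by_cases hy : y = x
      · subst hy
        simp only [Function.update_self, Option.some.injEq] at hp' hq'
        subst hp' hq'
        exact Or.inl rfl
      · exact Or.inr (mem_idxPairs (x := y) (by rwa [Function.update_of_ne hy] at hp' ⊢)
          (by rwa [Function.update_of_ne hy] at hq' ⊢))
  · rintro (rfl | hz | ⟨y, p', q', hp', hq', rfl⟩)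
    · exact mem_idxPairs (Function.update_self ..) (Function.update_self ..)
    · exact Or.inl hz
    · have hy : y ≠ x := by rintro rfl; simp at hp'
      exact mem_idxPairs (x := y) (by rwa [Function.update_of_ne hy] at hp' ⊢)
        (by rwa [Function.update_of_ne hy] at hq' ⊢)

lemma idxPairs_update_none_subset (x : ℕ) :
    idxPairs (Function.update vA x none) (Function.update vB x none) ⊆ idxPairs vA vB := by
  rintro z (hz | ⟨y, p, q, hp, hq, rfl⟩)
  · exact Or.inl hz
  · have hy : y ≠ x := by rintro rfl; simp at hp
    rw [Function.update_of_ne hy] at hp hq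
    exact mem_idxPairs hp hq

lemma subsingleton_idxPairs_diff (x : ℕ) :
    (idxPairs vA vB \ idxPairs (Function.update vA x none)
      (Function.update vB x none)).Subsingleton := by
  have key {z} (hz : z ∈ idxPairs vA vB \ idxPairs (Function.update vA x none)
      (Function.update vB x none)) :
      ∃ p q, vA x = some p ∧ vB x = some q ∧ z = (eCoe (ofLex p).1, eCoe (ofLex q).1) := by
    obtain ⟨hz | ⟨y, p, q, hp, hq, rfl⟩, hz'⟩ := hz
    · exact absurd (Or.inl hz) hz'
    · by_cases hy : y = x
      · exact ⟨p, q, hy ▸ hp, hy ▸ hq, rfl⟩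
      · refine absurd (mem_idxPairs (x := y) ?_ ?_) hz' <;> rwa [Function.update_of_ne hy]
  intro z hz z' hz'
  obtain ⟨p, q, hp, hq, rfl⟩ := key hz
  obtain ⟨p', q', hp', hq', rfl⟩ := key hz'
  simp_all

end IdxPairs

lemma GapMatching.exists_update {I J A B : Type} [LinearOrder I] [LinearOrder J]
    {GI : GapStruct I} {GJ : GapStruct J} {r : ℕ} {vA : ℕ → Option (I ×ₗ A)}
    {vB : ℕ → Option (J ×ₗ B)} (M : GapMatching GI GJ (r + 1) (idxPairs vA vB))
    (hfin : {x | (vA x).isSome}.Finite) (x : ℕ) (i : I) :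
    ∃ j : J, ∀ (a : A) (b : B), GapMatching GI GJ r
      (idxPairs (Function.update vA x (some (toLex (i, a))))
        (Function.update vB x (some (toLex (j, b))))) := by
  obtain ⟨j, hj⟩ := (M.of_subset (idxPairs_update_none_subset x)
    (subsingleton_idxPairs_diff x)).exists_insert
    ((idxPairs_finite hfin).subset (idxPairs_update_none_subset x))
    bot_mem_idxPairs top_mem_idxPairs i
  exact ⟨j, fun a b => by rw [idxPairs_update]; exact hj⟩

section Lex

variable {α β : Type} [LinearOrder α] [LinearOrder β]

lemma lex_isBot_iff {p : α ×ₗ β} : IsBot p ↔ IsBot (ofLex p).1 ∧ IsBot (ofLex p).2 := by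
  refine ⟨fun h => ⟨fun c => ?_, fun c => ?_⟩, fun h q => Prod.Lex.le_iff.2 ?_⟩
  · exact Prod.Lex.monotone_fst _ _ (h (toLex (c, (ofLex p).2)))
  · simpa using Prod.Lex.le_iff.1 (h (toLex ((ofLex p).1, c)))
  · exact (h.1 (ofLex q).1).lt_or_eq.imp_right fun he => ⟨he, h.2 _⟩

lemma lex_isTop_iff {p : α ×ₗ β} : IsTop p ↔ IsTop (ofLex p).1 ∧ IsTop (ofLex p).2 := by
  refine ⟨fun h => ⟨fun c => ?_, fun c => ?_⟩, fun h q => Prod.Lex.le_iff.2 ?_⟩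
  · exact Prod.Lex.monotone_fst _ _ (h (toLex (c, (ofLex p).2)))
  · simpa using Prod.Lex.le_iff.1 (h (toLex ((ofLex p).1, c)))
  · exact (h.1 (ofLex q).1).lt_or_eq.imp_right fun he => ⟨he, h.2 _⟩

end Lex

lemma covBy_iff_not_between {α : Type} [LT α] {a b : α} :
    a ⋖ b ↔ a < b ∧ ∀ c, ¬ (a < c ∧ c < b) :=
  ⟨fun h => ⟨h.1, fun _ hc => h.2 hc.1 hc.2⟩, fun h => ⟨h.1, fun c h₁ h₂ => h.2 c ⟨h₁, h₂⟩⟩⟩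

lemma updVal_eq_update {u : GWord} (α : ℕ → Option u.carrier) (x : ℕ) (p : u.carrier) :
    updVal α x p = Function.update α x (some p) := by
  funext y
  by_cases hy : y = x
  · subst hy; simp [updVal]
  · simp [updVal, hy]

section Transfer

variable {I J : Type} [LinearOrder I] [LinearOrder J] [Countable I] [Countable J]
  {GI : GapStruct I} {GJ : GapStruct J} {r : ℕ} {wa wb : GWord}
  {vA : ℕ → Option (wa.pow I).carrier} {vB : ℕ → Option (wb.pow J).carrier}
  {a : I → J → ℕ → Option wa.carrier} {b : I → J → ℕ → Option wb.carrier}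

/-- The situation in which atomic formulas of `S` transfer from `wa ^ I` under `vA` to
`wb ^ J` under `vB`. -/
structure AtomTransfer (S : Set FOForm) (GI : GapStruct I) (GJ : GapStruct J) (r : ℕ)
    (vA : ℕ → Option (wa.pow I).carrier) (vB : ℕ → Option (wb.pow J).carrier)
    (a : I → J → ℕ → Option wa.carrier) (b : I → J → ℕ → Option wb.carrier) : Prop where
  suc_mem : ∀ x y, FOForm.suc x y ∈ S → FOForm.fmax x ∈ S ∧ FOForm.fmin y ∈ S
  isSome : ∀ x, (vA x).isSome → (vB x).isSome
  matching : GapMatching GI GJ r (idxPairs vA vB)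
  eq_some : ∀ x p q, vA x = some p → vB x = some q →
    a (ofLex p).1 (ofLex q).1 x = some (ofLex p).2 ∧
      b (ofLex p).1 (ofLex q).1 x = some (ofLex q).2
  sat_local : ∀ i j, ∀ χ ∈ S, χ.IsAtomic → (∀ y ∈ χ.FV, (a i j y).isSome ∧ (b i j y).isSome) →
    wa.Sat (a i j) χ → wb.Sat (b i j) χ

namespace AtomTransfer

variable {S : Set FOForm} {x y : ℕ} {p p' : (wa.pow I).carrier}

lemma exists_eq_some (T : AtomTransfer S GI GJ r vA vB a b) (hp : vA x = some p) :
    ∃ q, vB x = some q :=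
  Option.isSome_iff_exists.1 (T.isSome x (by simp [hp]))

lemma fst_lt_fst (T : AtomTransfer S GI GJ r vA vB a b) {q q' : (wb.pow J).carrier}
    (hp : vA x = some p) (hq : vB x = some q) (hp' : vA y = some p') (hq' : vB y = some q')
    (h : (ofLex p).1 < (ofLex p').1) : (ofLex q).1 < (ofLex q').1 :=
  eCoe_lt_eCoe.1 ((T.matching.lt_iff _ (mem_idxPairs hp hq) _ (mem_idxPairs hp' hq')).1
    (eCoe_lt_eCoe.2 h))

lemma exists_local (T : AtomTransfer S GI GJ r vA vB a b) (hp : vA x = some p)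
    (hp' : vA y = some p') (heq : (ofLex p).1 = (ofLex p').1) :
    ∃ q q' : (wb.pow J).carrier, vB x = some q ∧ vB y = some q' ∧ (ofLex q).1 = (ofLex q').1 ∧
      a (ofLex p).1 (ofLex q).1 x = some (ofLex p).2 ∧
      a (ofLex p).1 (ofLex q).1 y = some (ofLex p').2 ∧
      b (ofLex p).1 (ofLex q).1 x = some (ofLex q).2 ∧
      b (ofLex p).1 (ofLex q).1 y = some (ofLex q').2 := by
  obtain ⟨q, hq⟩ := T.exists_eq_some hp
  obtain ⟨q', hq'⟩ := T.exists_eq_some hp'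
  have heq' : (ofLex q).1 = (ofLex q').1 := eCoe_injective
    ((T.matching.eq_iff (mem_idxPairs hp hq) (mem_idxPairs hp' hq')).1 (congrArg eCoe heq))
  obtain ⟨hax, hbx⟩ := T.eq_some x p q hp hq
  obtain ⟨hay, hby⟩ := T.eq_some y p' q' hp' hq'
  rw [← heq, ← heq'] at hay hby
  exact ⟨q, q', hq, hq', heq', hax, hay, hbx, hby⟩

lemma sat_empt [Nonempty I] [Nonempty J] (T : AtomTransfer S GI GJ r vA vB a b)
    (hψ : FOForm.empt ∈ S) (h : (wa.pow I).Sat vA .empt) : (wb.pow J).Sat vB .empt := by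
  obtain ⟨i⟩ := ‹Nonempty I›
  obtain ⟨j⟩ := ‹Nonempty J›
  have := T.sat_local i j _ hψ trivial (by simp [FOForm.FV]) ⟨fun c => h.false (toLex (i, c))⟩
  exact ⟨fun q => this.false (ofLex q).2⟩

lemma sat_eq (T : AtomTransfer S GI GJ r vA vB a b) (hψ : FOForm.eq x y ∈ S)
    (h : (wa.pow I).Sat vA (.eq x y)) : (wb.pow J).Sat vB (.eq x y) := by
  obtain ⟨p, _, hp, hp', rfl⟩ := h
  obtain ⟨q, q', hq, hq', heq, hax, hay, hbx, hby⟩ := T.exists_local hp hp' rfl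
  have := T.sat_local _ _ _ hψ trivial (by simp [FOForm.FV, hax, hay, hbx, hby])
    ⟨_, _, hax, hay, rfl⟩
  simp [GWord.Sat, hbx, hby] at this
  exact ⟨q, q', hq, hq', ofLex.injective (Prod.ext heq this.symm)⟩

lemma sat_lab (T : AtomTransfer S GI GJ r vA vB a b) {c : ℕ} (hψ : FOForm.lab x c ∈ S)
    (h : (wa.pow I).Sat vA (.lab x c)) : (wb.pow J).Sat vB (.lab x c) := by
  obtain ⟨p, hp, hc⟩ := h
  obtain ⟨q, -, hq, -, -, hax, -, hbx, -⟩ := T.exists_local hp hp rfl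
  have := T.sat_local _ _ _ hψ trivial (by simp [FOForm.FV, hax, hbx]) ⟨_, hax, hc⟩
  simp [GWord.Sat, hbx] at this
  exact ⟨q, hq, this⟩

lemma sat_lt (T : AtomTransfer S GI GJ r vA vB a b) (hψ : FOForm.lt x y ∈ S)
    (h : (wa.pow I).Sat vA (.lt x y)) : (wb.pow J).Sat vB (.lt x y) := by
  obtain ⟨p, p', hp, hp', hlt⟩ := h
  rcases Prod.Lex.lt_iff.1 hlt with hlt | ⟨heq, hlt⟩
  · obtain ⟨q, hq⟩ := T.exists_eq_some hp
    obtain ⟨q', hq'⟩ := T.exists_eq_some hp'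
    exact ⟨q, q', hq, hq', Prod.Lex.lt_iff.2 (Or.inl (T.fst_lt_fst hp hq hp' hq' hlt))⟩
  · obtain ⟨q, q', hq, hq', heq', hax, hay, hbx, hby⟩ := T.exists_local hp hp' heq
    have := T.sat_local _ _ _ hψ trivial (by simp [FOForm.FV, hax, hay, hbx, hby])
      ⟨_, _, hax, hay, hlt⟩
    simp [GWord.Sat, hbx, hby] at this
    exact ⟨q, q', hq, hq', Prod.Lex.lt_iff.2 (Or.inr ⟨heq', this⟩)⟩

lemma sat_le (T : AtomTransfer S GI GJ r vA vB a b) (hψ : FOForm.le x y ∈ S)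
    (h : (wa.pow I).Sat vA (.le x y)) : (wb.pow J).Sat vB (.le x y) := by
  obtain ⟨p, p', hp, hp', hle⟩ := h
  rcases Prod.Lex.le_iff.1 hle with hlt | ⟨heq, hle⟩
  · obtain ⟨q, hq⟩ := T.exists_eq_some hp
    obtain ⟨q', hq'⟩ := T.exists_eq_some hp'
    exact ⟨q, q', hq, hq', Prod.Lex.le_iff.2 (Or.inl (T.fst_lt_fst hp hq hp' hq' hlt))⟩
  · obtain ⟨q, q', hq, hq', heq', hax, hay, hbx, hby⟩ := T.exists_local hp hp' heq
    have := T.sat_local _ _ _ hψ trivial (by simp [FOForm.FV, hax, hay, hbx, hby])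
      ⟨_, _, hax, hay, hle⟩
    simp [GWord.Sat, hbx, hby] at this
    exact ⟨q, q', hq, hq', Prod.Lex.le_iff.2 (Or.inr ⟨heq', this⟩)⟩

/-- A successor pair either lies in one copy, or joins the maximum of a copy to the minimum of
the next one; the latter is detected by `max` and `min`, which is where suc-stability enters. -/
lemma sat_suc (T : AtomTransfer S GI GJ r vA vB a b) (hψ : FOForm.suc x y ∈ S)
    (h : (wa.pow I).Sat vA (.suc x y)) : (wb.pow J).Sat vB (.suc x y) := by
  obtain ⟨p, p', hp, hp', hcov⟩ := h
  rcases Prod.Lex.covBy_iff.1 (covBy_iff_not_between.2 hcov) with ⟨heq, hcov⟩ | ⟨hcov, hmax, hmin⟩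
  · obtain ⟨q, q', hq, hq', heq', hax, hay, hbx, hby⟩ := T.exists_local hp hp' heq
    obtain ⟨c, c', hc, hc', hcc⟩ := T.sat_local _ _ _ hψ trivial
      (by simp [FOForm.FV, hax, hay, hbx, hby]) ⟨_, _, hax, hay, covBy_iff_not_between.1 hcov⟩
    rw [hbx, Option.some.injEq] at hc
    rw [hby, Option.some.injEq] at hc'
    subst hc hc'
    exact ⟨q, q', hq, hq', covBy_iff_not_between.1
      (Prod.Lex.covBy_iff.2 (Or.inl ⟨heq', covBy_iff_not_between.2 hcc⟩))⟩
  · obtain ⟨q, -, hq, -, -, hax, -, hbx, -⟩ := T.exists_local hp hp rfl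
    obtain ⟨q', -, hq', -, -, hay, -, hby, -⟩ := T.exists_local hp' hp' rfl
    have hidx := eCoe_covBy_eCoe.1
      (T.matching.covBy (mem_idxPairs hp hq) (mem_idxPairs hp' hq') (eCoe_covBy_eCoe.2 hcov))
    have hmax' := T.sat_local _ _ _ (T.suc_mem x y hψ).1 trivial (by simp [FOForm.FV, hax, hbx])
      ⟨_, hax, isTop_iff_isMax.2 hmax⟩
    have hmin' := T.sat_local _ _ _ (T.suc_mem x y hψ).2 trivial (by simp [FOForm.FV, hay, hby])
      ⟨_, hay, isBot_iff_isMin.2 hmin⟩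
    simp only [GWord.Sat, hbx, hby, Option.some.injEq, exists_eq_left'] at hmax' hmin'
    exact ⟨q, q', hq, hq', covBy_iff_not_between.1 (Prod.Lex.covBy_iff.2
      (Or.inr ⟨hidx, isTop_iff_isMax.1 hmax', isBot_iff_isMin.1 hmin'⟩))⟩

lemma sat_fmin (T : AtomTransfer S GI GJ r vA vB a b) (hψ : FOForm.fmin x ∈ S)
    (h : (wa.pow I).Sat vA (.fmin x)) : (wb.pow J).Sat vB (.fmin x) := by
  obtain ⟨p, hp, hbot⟩ := h
  obtain ⟨hbot₁, hbot₂⟩ := lex_isBot_iff.1 hbot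
  obtain ⟨q, -, hq, -, -, hax, -, hbx, -⟩ := T.exists_local hp hp rfl
  have hidx := bot_covBy_eCoe.1 (T.matching.covBy bot_mem_idxPairs (mem_idxPairs hp hq)
    (bot_covBy_eCoe.2 (isBot_iff_isMin.1 hbot₁)))
  have hloc := T.sat_local _ _ _ hψ trivial (by simp [FOForm.FV, hax, hbx]) ⟨_, hax, hbot₂⟩
  simp only [GWord.Sat, hbx, Option.some.injEq, exists_eq_left'] at hloc
  exact ⟨q, hq, lex_isBot_iff.2 ⟨isBot_iff_isMin.2 hidx, hloc⟩⟩

lemma sat_fmax (T : AtomTransfer S GI GJ r vA vB a b) (hψ : FOForm.fmax x ∈ S)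
    (h : (wa.pow I).Sat vA (.fmax x)) : (wb.pow J).Sat vB (.fmax x) := by
  obtain ⟨p, hp, htop⟩ := h
  obtain ⟨htop₁, htop₂⟩ := lex_isTop_iff.1 htop
  obtain ⟨q, -, hq, -, -, hax, -, hbx, -⟩ := T.exists_local hp hp rfl
  have hidx := eCoe_covBy_top.1 (T.matching.covBy (mem_idxPairs hp hq) top_mem_idxPairs
    (eCoe_covBy_top.2 (isTop_iff_isMax.1 htop₁)))
  have hloc := T.sat_local _ _ _ hψ trivial (by simp [FOForm.FV, hax, hbx]) ⟨_, hax, htop₂⟩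
  simp only [GWord.Sat, hbx, Option.some.injEq, exists_eq_left'] at hloc
  exact ⟨q, hq, lex_isTop_iff.2 ⟨isTop_iff_isMax.2 hidx, hloc⟩⟩

lemma sat_pow [Nonempty I] [Nonempty J] (T : AtomTransfer S GI GJ r vA vB a b) {ψ : FOForm}
    (hψ : ψ ∈ S) (hat : ψ.IsAtomic) : (wa.pow I).Sat vA ψ → (wb.pow J).Sat vB ψ := by
  cases ψ with
  | top | bot => exact id
  | empt => exact T.sat_empt hψ
  | eq x y => exact T.sat_eq hψ
  | lab x c => exact T.sat_lab hψ
  | lt x y => exact T.sat_lt hψ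
  | le x y => exact T.sat_le hψ
  | suc x y => exact T.sat_suc hψ
  | fmin x => exact T.sat_fmin hψ
  | fmax x => exact T.sat_fmax hψ
  | _ => exact absurd hat id

end AtomTransfer

end Transfer

section Invariant

variable {I J : Type} [LinearOrder I] [LinearOrder J] [Countable I] [Countable J]
  {GI : GapStruct I} {GJ : GapStruct J} {wa wb : GWord}
  {R R' : Set FOForm → (ℕ → Option wa.carrier) → (ℕ → Option wb.carrier) → Prop}
  {G : Set FOForm} {r : ℕ} {vA : ℕ → Option (wa.pow I).carrier}
  {vB : ℕ → Option (wb.pow J).carrier}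
  {a : I → J → ℕ → Option wa.carrier} {b : I → J → ℕ → Option wb.carrier}

/-- Duplicator's invariant in the game on `wa ^ I` and `wb ^ J` with `r` moves left. For every
pair of copies `(i, j)` a position `(a i j, b i j)` of the game on `(wa, wb)` is kept, and a
variable placed in copy `i` of `wa` and copy `j` of `wb` has the same local positions there. -/
structure PowInv (R : Set FOForm → (ℕ → Option wa.carrier) → (ℕ → Option wb.carrier) → Prop)
    (GI : GapStruct I) (GJ : GapStruct J) (G : Set FOForm) (r : ℕ)
    (vA : ℕ → Option (wa.pow I).carrier) (vB : ℕ → Option (wb.pow J).carrier)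
    (a : I → J → ℕ → Option wa.carrier) (b : I → J → ℕ → Option wb.carrier) : Prop where
  sucStable : SucStable G
  qd_le : ∀ φ ∈ G, φ.qd ≤ r
  finite : {x | (vA x).isSome}.Finite
  isSome_iff : ∀ x, (vA x).isSome ↔ (vB x).isSome
  rel : ∀ i j, R G (a i j) (b i j)
  eq_some : ∀ x p q, vA x = some p → vB x = some q →
    a (ofLex p).1 (ofLex q).1 x = some (ofLex p).2 ∧
      b (ofLex p).1 (ofLex q).1 x = some (ofLex q).2
  matching : GapMatching GI GJ r (idxPairs vA vB)

namespace PowInv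

lemma swap (P : PowInv R GI GJ G r vA vB a b) :
    PowInv (fun G b a => R G a b) GJ GI G r vB vA (fun j i => b i j) (fun j i => a i j) where
  sucStable := P.sucStable
  qd_le := P.qd_le
  finite := P.finite.subset fun x hx => (P.isSome_iff x).2 hx
  isSome_iff x := (P.isSome_iff x).symm
  rel j i := P.rel i j
  eq_some x q p hq hp := (P.eq_some x p q hp hq).symm
  matching := idxPairs_swap (vA := vA) ▸ P.matching.swap

lemma atomTransfer (P : PowInv R GI GJ G r vA vB a b)
    (hR : ∀ G a b, R G a b → ¬ SpoilerWinsNow ⟨G, wa, wb, a, b⟩) :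
    AtomTransfer G GI GJ r vA vB a b where
  suc_mem x y h := (P.sucStable.1 .hole x y h).2
  isSome x := (P.isSome_iff x).1
  matching := P.matching
  eq_some := P.eq_some
  sat_local i j χ hχ hat hFV h := by_contra fun h' =>
    hR _ _ _ (P.rel i j) ⟨χ, hχ, Or.inl hat, fun y hy => (hFV y hy).1, h, h'⟩

/-- Negated literals of `G` transfer atomic formulas backwards. -/
lemma atomTransfer_not (P : PowInv R GI GJ G r vA vB a b)
    (hR : ∀ G a b, R G a b → ¬ SpoilerWinsNow ⟨G, wa, wb, a, b⟩) :
    AtomTransfer {χ | FOForm.not χ ∈ G} GJ GI r vB vA (fun j i => b i j) (fun j i => a i j) where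
  suc_mem x y h := (P.sucStable.1 (.notC .hole) x y h).2
  isSome x := (P.isSome_iff x).2
  matching := P.swap.matching
  eq_some := P.swap.eq_some
  sat_local j i χ hχ hat hFV h := by_contra fun h' => hR _ _ _ (P.rel i j)
    ⟨.not χ, hχ, Or.inr ⟨χ, hat, rfl⟩, fun y hy => (hFV y hy).2, h', fun h'' => h'' h⟩

lemma not_spoilerWinsNow [Nonempty I] [Nonempty J] (P : PowInv R GI GJ G r vA vB a b)
    (hR : ∀ G a b, R G a b → ¬ SpoilerWinsNow ⟨G, wa, wb, a, b⟩) :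
    ¬ SpoilerWinsNow ⟨G, wa.pow I, wb.pow J, vA, vB⟩ := by
  rintro ⟨φ, hφ, hat | ⟨ψ, hat, rfl⟩, -, h₁, h₂⟩
  · exact h₂ ((P.atomTransfer hR).sat_pow hφ hat h₁)
  · exact h₁ ((P.atomTransfer_not hR).sat_pow hφ hat (not_not.1 h₂))

/-- Duplicator's answer to a move in `wa ^ I`: the index is answered on the index orders, and
the local position by the sub-game of the two matched copies. -/
lemma step_left (P : PowInv R GI GJ G r vA vB a b) {Q : Quant} {x : ℕ}
    (hne : (reduct Q x G).Nonempty) (q : (wa.pow I).carrier)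
    (hsub : ∀ i j, ∃ s, R' (reduct Q x G) (updVal (a i j) x (ofLex q).2) (updVal (b i j) x s)) :
    ∃ q' a' b', PowInv R' GI GJ (reduct Q x G) (r - 1) (updVal vA x q) (updVal vB x q') a' b' := by
  obtain ⟨φ, hφ⟩ := hne
  obtain ⟨r, rfl⟩ : ∃ r', r = r' + 1 :=
    ⟨r - 1, by have := qd_add_one_le_of_mem_reduct P.qd_le hφ; omega⟩
  choose s hs using hsub
  obtain ⟨j, hj⟩ := P.matching.exists_update P.finite x (ofLex q).1
  obtain ⟨q', hq'⟩ : ∃ q' : (wb.pow J).carrier, q' = toLex (j, s (ofLex q).1 j) := ⟨_, rfl⟩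
  refine ⟨q', _, _, P.sucStable.reduct Q x, fun ψ hψ => ?_,
    (P.finite.insert x).subset fun y hy => ?_, fun y => ?_, hs, fun y p p' hp hp' => ?_, ?_⟩
  · have := qd_add_one_le_of_mem_reduct P.qd_le hψ
    omega
  · by_cases hyx : y = x
    · exact Or.inl hyx
    · exact Or.inr (by simpa [updVal, hyx] using hy)
  · by_cases hy : y = x
    · subst hy
      simp [updVal]
    · simp [updVal, hy, P.isSome_iff y]
  · by_cases hy : y = x
    · subst hy
      simp only [updVal, if_pos, Option.some.injEq] at hp hp'
      subst hp hp' hq'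
      exact ⟨if_pos rfl, if_pos rfl⟩
    · simp only [updVal, hy, if_false] at hp hp' ⊢
      exact P.eq_some y p p' hp hp'
  · rw [updVal_eq_update, updVal_eq_update, Nat.add_sub_cancel, hq']
    exact hj _ _

lemma step_right (P : PowInv R GI GJ G r vA vB a b) {Q : Quant} {x : ℕ}
    (hne : (reduct Q x G).Nonempty) (q : (wb.pow J).carrier)
    (hsub : ∀ i j, ∃ s, R' (reduct Q x G) (updVal (a i j) x s) (updVal (b i j) x (ofLex q).2)) :
    ∃ q' a' b', PowInv R' GI GJ (reduct Q x G) (r - 1) (updVal vA x q') (updVal vB x q) a' b' := by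
  obtain ⟨q', b', a', P'⟩ := P.swap.step_left (R' := fun G b a => R' G a b) hne q
    fun j i => hsub i j
  exact ⟨q', fun i j => a' j i, fun i j => b' j i, P'.swap⟩

end PowInv

end Invariant

/-- The safety condition of `SafeInv` at a single configuration. -/
def SafeAt (Good : Set Config) (D : Config) : Prop :=
  (¬ SpoilerWinsNow D) ∧
  (∀ x : ℕ, (reduct .qex x D.frag).Nonempty →
    ∀ q : D.w1.carrier, ∃ r : D.w2.carrier,
      (⟨reduct .qex x D.frag, D.w1, D.w2, updVal D.val1 x q, updVal D.val2 x r⟩ : Config) ∈ Good) ∧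
  (∀ x : ℕ, (reduct .qall x D.frag).Nonempty →
    ∀ q : D.w2.carrier, ∃ r : D.w1.carrier,
      (⟨reduct .qall x D.frag, D.w1, D.w2, updVal D.val1 x r, updVal D.val2 x q⟩ : Config) ∈ Good) ∧
  (∀ x : ℕ, (reduct .qnex x D.frag).Nonempty →
    ∀ q : D.w2.carrier, ∃ r : D.w1.carrier,
      (⟨reduct .qnex x D.frag, D.w2, D.w1, updVal D.val2 x q, updVal D.val1 x r⟩ : Config) ∈ Good) ∧
  (∀ x : ℕ, (reduct .qnall x D.frag).Nonempty →
    ∀ q : D.w1.carrier, ∃ r : D.w2.carrier,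
      (⟨reduct .qnall x D.frag, D.w2, D.w1, updVal D.val2 x r, updVal D.val1 x q⟩ : Config) ∈ Good)

lemma safeInv_iff {Good : Set Config} : SafeInv Good ↔ ∀ D ∈ Good, SafeAt Good D := Iff.rfl

section PowGame

variable {I J : Type} [LinearOrder I] [LinearOrder J] [Countable I] [Countable J]

def inGood (Good₀ : Set Config) (u v : GWord) (G : Set FOForm) (a : ℕ → Option u.carrier)
    (b : ℕ → Option v.carrier) : Prop :=
  (⟨G, u, v, a, b⟩ : Config) ∈ Good₀

def powConfigs (Good₀ : Set Config) (GI : GapStruct I) (GJ : GapStruct J) (u v : GWord) :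
    Set Config :=
  {C | ∃ G r vA vB a b, PowInv (inGood Good₀ u v) GI GJ G r vA vB a b ∧
    C = ⟨G, u.pow I, v.pow J, vA, vB⟩}

/-- Negated quantifiers swap the words, in the sub-games as in the power game; hence the
swapped configurations in the target set. -/
lemma safeAt_of_mem_powConfigs [Nonempty I] [Nonempty J] {Good₀ : Set Config}
    (h₀ : SafeInv Good₀) {GI : GapStruct I} {GJ : GapStruct J} {u v : GWord} {C : Config}
    (hC : C ∈ powConfigs Good₀ GI GJ u v) :
    SafeAt (powConfigs Good₀ GI GJ u v ∪ powConfigs Good₀ GJ GI v u) C := by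
  obtain ⟨G, r, vA, vB, a, b, P, rfl⟩ := hC
  refine ⟨P.not_spoilerWinsNow fun G a b h => (h₀ _ h).1, fun x hne q => ?_, fun x hne q => ?_,
    fun x hne q => ?_, fun x hne q => ?_⟩
  · obtain ⟨q', _, _, P'⟩ := P.step_left (R' := inGood Good₀ u v) hne q
      fun i j => (h₀ _ (P.rel i j)).2.1 x hne (ofLex q).2
    exact ⟨q', Or.inl ⟨_, _, _, _, _, _, P', rfl⟩⟩
  · obtain ⟨q', _, _, P'⟩ := P.step_right (R' := inGood Good₀ u v) hne q
      fun i j => (h₀ _ (P.rel i j)).2.2.1 x hne (ofLex q).2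
    exact ⟨q', Or.inl ⟨_, _, _, _, _, _, P', rfl⟩⟩
  · obtain ⟨q', _, _, P'⟩ := P.step_right (R' := fun G a b => inGood Good₀ v u G b a) hne q
      fun i j => (h₀ _ (P.rel i j)).2.2.2.1 x hne (ofLex q).2
    exact ⟨q', Or.inr ⟨_, _, _, _, _, _, P'.swap, rfl⟩⟩
  · obtain ⟨q', _, _, P'⟩ := P.step_left (R' := fun G a b => inGood Good₀ v u G b a) hne q
      fun i j => (h₀ _ (P.rel i j)).2.2.2.2 x hne (ofLex q).2
    exact ⟨q', Or.inr ⟨_, _, _, _, _, _, P'.swap, rfl⟩⟩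

theorem duplicatorWinsGame_pow {F : Set FOForm} (hsuc : SucStable F) {n : ℕ}
    (hqd : QDBoundedBy F n) {u v : GWord} (hwin : DuplicatorWinsGame F u v)
    (GI : GapStruct I) (GJ : GapStruct J) (hI : ((2 ^ (n + 1) : ℕ) : ℕ∞) ≤ GI.D ⊥ ⊤)
    (hJ : ((2 ^ (n + 1) : ℕ) : ℕ∞) ≤ GJ.D ⊥ ⊤) :
    DuplicatorWinsGame F (u.pow I) (v.pow J) := by
  obtain ⟨Good₀, hmem, h₀⟩ := hwin
  have h1 : (1 : ℕ∞) < ((2 ^ (n + 1) : ℕ) : ℕ∞) := by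
    exact_mod_cast Nat.one_lt_two_pow (Nat.succ_ne_zero n)
  have := GI.nonempty (h1.trans_le hI)
  have := GJ.nonempty (h1.trans_le hJ)
  have hinit : PowInv (inGood Good₀ u v) GI GJ F n
      (fun _ => none) (fun _ => none) (fun _ _ _ => none) (fun _ _ _ => none) :=
    ⟨hsuc, hqd, by simp, by simp, fun _ _ => hmem, by simp, by
      simpa [idxPairs] using GapMatching.sentinels (Or.inr ⟨hI, hJ⟩)⟩
  refine ⟨powConfigs Good₀ GI GJ u v ∪ powConfigs Good₀ GJ GI v u,
    Or.inl ⟨_, _, _, _, _, _, hinit, rfl⟩, safeInv_iff.2 ?_⟩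
  rintro C (hC | hC)
  · exact safeAt_of_mem_powConfigs h₀ hC
  · exact Set.union_comm _ _ ▸ safeAt_of_mem_powConfigs h₀ hC

end PowGame

theorem statement_3_general (F : Set FOForm) (hsuc : SucStable F)
    (n : ℕ) (hqd : QDBoundedBy F n) (u v : GWord)
    (hwin : DuplicatorWinsGame F u v) (m : ℕ) (hm : 2 ^ (n + 1) - 1 ≤ m) :
    DuplicatorWinsGame F (u.pow (Fin m)) (v.pow Rho) ∧
      DuplicatorWinsGame F (u.pow Rho) (v.pow (Fin m)) := by
  have hfin : ((2 ^ (n + 1) : ℕ) : ℕ∞) ≤ (finGap m).D ⊥ ⊤ := by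
    rw [finGap_D_bot_top]
    exact_mod_cast (by omega : 2 ^ (n + 1) ≤ m + 1)
  have hrho : ((2 ^ (n + 1) : ℕ) : ℕ∞) ≤ rhoGap.D ⊥ ⊤ := rhoGap_D_bot_top ▸ le_top
  exact ⟨duplicatorWinsGame_pow hsuc hqd hwin _ _ hfin hrho,
    duplicatorWinsGame_pow hsuc hqd hwin _ _ hrho hfin⟩

/-- Lemma on exponentiation: if `F` is suc-stable with quantifier depth
bounded by `n` and Duplicator wins the `F`-game on `(u, v)`, then for every
`m ≥ 2^(n+1) - 1` Duplicator wins the `F`-games on `(u^m, v^ρ)` and on `(u^ρ, v^m)`. -/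
theorem statement_3 (F : Set FOForm) (hF : IsFragment F) (hsuc : SucStable F)
    (n : ℕ) (hqd : QDBoundedBy F n) (u v : GWord)
    (hwin : DuplicatorWinsGame F u v) (m : ℕ) (hm : 2 ^ (n + 1) - 1 ≤ m) :
    DuplicatorWinsGame F (u.pow (Fin m)) (v.pow Rho) ∧
      DuplicatorWinsGame F (u.pow Rho) (v.pow (Fin m)) :=
  statement_3_general F hsuc n hqd u v hwin m hm

end EFGames
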